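/- arXiv:2404.14226 — 5 statements merged into one kernel-verified Lean document; each statement's English description precedes it below -/
import Mathlib

section
/- Fix an integer k ≥ 2, an integer m ≥ 0, and constants C_F, c₁, c₂ > 0. There exists a constant C > 0, depending only on k, m, C_F, c₁, c₂, such that for every h ∈ (0,1] and every map F : ℝ² → ℝ² whose two components are polynomials of total degree ≤ k, which is injective on the closure of T̂ and satisfies |F|_{W^{r,∞}(T̂)} ≤ C_F h^r for 0 ≤ r ≤ k and c₁h² ≤ det DF(x) ≤ c₂h² for all x in the closure of T̂, the matrix-valued map A(x) := DF(x)/det DF(x) satisfies |A|_{W^{m,∞}(T̂)} ≤ C h^{m−1}. -/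
open Set MeasureTheory Function

noncomputable section

/-- The open reference triangle with vertices (0,0), (1,0), (0,1). -/
def Tref : Set (ℝ × ℝ) := {x | 0 < x.1 ∧ 0 < x.2 ∧ x.1 + x.2 < 1}

/-- The three vertices of the reference triangle. -/
def vtx : Fin 3 → ℝ × ℝ := ![(0, 0), (1, 0), (0, 1)]

/-- The (open) Clough–Tocher subtriangles, obtained by connecting the barycenter
to the vertices. -/
def ctK (i : Fin 3) : Set (ℝ × ℝ) :=
  interior (convexHull ℝ {vtx i, vtx (i + 1), ((1 : ℝ) / 3, (1 : ℝ) / 3)})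

/-- A map `ℝ² → ℝ²` whose two components are polynomials of total degree ≤ k. -/
def IsPolyMap (k : ℕ) (F : ℝ × ℝ → ℝ × ℝ) : Prop :=
  ∃ P Q : MvPolynomial (Fin 2) ℝ, P.totalDegree ≤ k ∧ Q.totalDegree ≤ k ∧
    ∀ x : ℝ × ℝ,
      F x = (MvPolynomial.eval ![x.1, x.2] P, MvPolynomial.eval ![x.1, x.2] Q)

/-- The Jacobian determinant of `F`. -/
def jacDet (F : ℝ × ℝ → ℝ × ℝ) (x : ℝ × ℝ) : ℝ :=
  LinearMap.det ((fderiv ℝ F x) : (ℝ × ℝ) →ₗ[ℝ] (ℝ × ℝ))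

/-- The Piola matrix `A(x) = DF(x) / det DF(x)`. -/
def Amap (F : ℝ × ℝ → ℝ × ℝ) (x : ℝ × ℝ) : (ℝ × ℝ) →L[ℝ] (ℝ × ℝ) :=
  (jacDet F x)⁻¹ • fderiv ℝ F x

/-- `B(x) = det DF(x) · (DF(x))⁻¹`, the adjugate of `DF`. -/
def Bmap (F : ℝ × ℝ → ℝ × ℝ) (x : ℝ × ℝ) : (ℝ × ℝ) →L[ℝ] (ℝ × ℝ) :=
  jacDet F x • Ring.inverse (fderiv ℝ F x)

/-- `v` is the Piola transform of `v̂` under `F`. -/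
def IsPiola (F vh v : ℝ × ℝ → ℝ × ℝ) : Prop :=
  ∀ x ∈ closure Tref, v (F x) = Amap F x (vh x)

/-- The `W^{m,p}` seminorm over a set `S` (for `p < ∞`). -/
def semiLp {E : Type*} [NormedAddCommGroup E] [NormedSpace ℝ E]
    (m : ℕ) (p : ℝ) (w : ℝ × ℝ → E) (S : Set (ℝ × ℝ)) : ℝ :=
  (∫ x in S, ‖iteratedFDeriv ℝ m w x‖ ^ p) ^ (1 / p)

/-- The `W^{m,p}` norm over a set `S`: the sum of the seminorms up to order `m`. -/
def normWmp {E : Type*} [NormedAddCommGroup E] [NormedSpace ℝ E]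
    (m : ℕ) (p : ℝ) (w : ℝ × ℝ → E) (S : Set (ℝ × ℝ)) : ℝ :=
  ∑ j ∈ Finset.range (m + 1), semiLp j p w S

/-- The isoparametric bounds of order `k` with constants `CF, c₁, c₂` and parameter `h`. -/
def IsoparamBounds (k : ℕ) (CF c₁ c₂ h : ℝ) (F : ℝ × ℝ → ℝ × ℝ) : Prop :=
  InjOn F (closure Tref) ∧
  (∀ m : ℕ, m ≤ k → ∀ x ∈ Tref, ‖iteratedFDeriv ℝ m F x‖ ≤ CF * h ^ m) ∧
  (∀ m : ℕ, m ≤ k + 1 → ∀ y ∈ F '' Tref,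
    ‖iteratedFDeriv ℝ m (invFunOn F (closure Tref)) y‖ ≤ CF * h ^ (-(m : ℤ))) ∧
  (∀ x ∈ closure Tref, c₁ * h ^ 2 ≤ jacDet F x ∧ jacDet F x ≤ c₂ * h ^ 2)

/-- The (planar) divergence of a vector field. -/
def pdiv (w : ℝ × ℝ → ℝ × ℝ) (x : ℝ × ℝ) : ℝ :=
  (fderiv ℝ w x (1, 0)).1 + (fderiv ℝ w x (0, 1)).2

/-!
Write `J = det DF`, so that `A = J⁻¹ • DF`. Since `F` is polynomial of degree `≤ k`, the
derivatives of `DF` of order `≥ k` vanish, and the hypothesis gives `‖D^j DF‖ ≤ C_F h^(j+1)` for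
every `j`. The determinant is a sum of products of two entries of `DF`, so the Leibniz rule gives
`‖D^j J‖ ≲ h^(j+2)`. Faà di Bruno applied to `t ↦ t⁻¹` and `J / h²`, which is `≥ c₁` and has
`j`-th derivative `≲ h^j`, gives `‖D^j J⁻¹‖ ≲ h^(j-2)`, and a last Leibniz step gives
`‖D^m A‖ ≲ h^(m-1)`.
-/

open scoped ContDiff Nat

section VanishingDerivatives

variable {E : Type*} [NormedAddCommGroup E] [NormedSpace ℝ E]

theorem iteratedFDeriv_mul_eq_zero {f g : E → ℝ} (hf : ContDiff ℝ ∞ f) (hg : ContDiff ℝ ∞ g)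
    {a b : ℕ} (hfa : ∀ i, a < i → iteratedFDeriv ℝ i f = 0)
    (hgb : ∀ i, b < i → iteratedFDeriv ℝ i g = 0) {r : ℕ} (hr : a + b < r) :
    iteratedFDeriv ℝ r (fun y => f y * g y) = 0 := by
  funext x
  refine norm_le_zero_iff.mp ((norm_iteratedFDeriv_mul_le hf hg x
    (WithTop.coe_le_coe.mpr le_top)).trans (Finset.sum_nonpos fun i hi => ?_))
  rcases lt_or_ge a i with hai | hia
  · simp [hfa i hai]
  · simp [hgb (r - i) (by omega)]

theorem iteratedFDeriv_clm_pow_eq_zero (L : E →L[ℝ] ℝ) {a r : ℕ} (hr : a < r) :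
    iteratedFDeriv ℝ r (fun y => L y ^ a) = 0 := by
  funext x
  have hpow : iteratedFDeriv ℝ r (fun t : ℝ => t ^ a) (L x) = 0 := by
    rw [← norm_eq_zero, norm_iteratedFDeriv_eq_norm_iteratedDeriv, iteratedDeriv_pow,
      Nat.descFactorial_eq_zero_iff_lt.mpr hr]
    simp
  change iteratedFDeriv ℝ r ((fun t : ℝ => t ^ a) ∘ L) x = 0
  rw [L.iteratedFDeriv_comp_right (contDiff_fun_id.pow a) x (WithTop.coe_le_coe.mpr le_top),
    hpow]
  rfl

end VanishingDerivatives

section PolynomialMaps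

theorem iteratedFDeriv_prod_pow_eq_zero {σ : Type*} [Fintype σ] [DecidableEq σ] (d : σ → ℕ)
    (s : Finset σ) {r : ℕ} (hr : ∑ i ∈ s, d i < r) :
    iteratedFDeriv ℝ r (fun x : σ → ℝ => ∏ i ∈ s, x i ^ d i) = 0 := by
  induction s using Finset.induction_on generalizing r with
  | empty => simpa using iteratedFDeriv_const_of_ne (by simpa using hr.ne') (1 : ℝ)
  | insert i s hi ih =>
    simp only [Finset.prod_insert hi]
    rw [Finset.sum_insert hi] at hr
    exact iteratedFDeriv_mul_eq_zero (by fun_prop) (by fun_prop)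
      (fun _ => iteratedFDeriv_clm_pow_eq_zero (ContinuousLinearMap.proj i : (σ → ℝ) →L[ℝ] ℝ))
      (fun _ => ih) hr

theorem MvPolynomial.iteratedFDeriv_eval_eq_zero {σ : Type*} [Fintype σ]
    (p : MvPolynomial σ ℝ) {r : ℕ} (hr : p.totalDegree < r) :
    iteratedFDeriv ℝ r (fun x : σ → ℝ => eval x p) = 0 := by
  classical
  simp_rw [eval_eq']
  rw [iteratedFDeriv_sum fun _ _ => by fun_prop]
  refine Finset.sum_eq_zero fun d hd => ?_
  have hdeg : ∑ i, d i ≤ p.totalDegree := by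
    simpa [Finsupp.sum_fintype] using le_totalDegree hd
  exact iteratedFDeriv_mul_eq_zero contDiff_const (by fun_prop)
    (fun _ hi => iteratedFDeriv_const_of_ne hi.ne' _)
    (fun _ => iteratedFDeriv_prod_pow_eq_zero _ _) (by omega)

def prodToFinTwo : ℝ × ℝ →L[ℝ] (Fin 2 → ℝ) :=
  ContinuousLinearMap.pi ![ContinuousLinearMap.fst ℝ ℝ ℝ, ContinuousLinearMap.snd ℝ ℝ ℝ]

theorem prodToFinTwo_apply (x : ℝ × ℝ) : prodToFinTwo x = ![x.1, x.2] := by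
  ext i; fin_cases i <;> rfl

theorem IsPolyMap.eq_prodMk {k : ℕ} {F : ℝ × ℝ → ℝ × ℝ} (hF : IsPolyMap k F) :
    ∃ P Q : MvPolynomial (Fin 2) ℝ, P.totalDegree ≤ k ∧ Q.totalDegree ≤ k ∧
      F = fun x =>
        (MvPolynomial.eval (prodToFinTwo x) P, MvPolynomial.eval (prodToFinTwo x) Q) := by
  obtain ⟨P, Q, hP, hQ, hF⟩ := hF
  exact ⟨P, Q, hP, hQ, funext fun x => by simp only [hF, prodToFinTwo_apply]⟩

theorem contDiff_eval_prodToFinTwo {n : WithTop ℕ∞} (P : MvPolynomial (Fin 2) ℝ) :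
    ContDiff ℝ n fun x => MvPolynomial.eval (prodToFinTwo x) P :=
  (AnalyticOnNhd.eval_mvPolynomial P).contDiff.comp prodToFinTwo.contDiff

theorem IsPolyMap.contDiff {k : ℕ} {F : ℝ × ℝ → ℝ × ℝ} (hF : IsPolyMap k F)
    {n : WithTop ℕ∞} : ContDiff ℝ n F := by
  obtain ⟨P, Q, -, -, rfl⟩ := hF.eq_prodMk
  exact (contDiff_eval_prodToFinTwo P).prodMk (contDiff_eval_prodToFinTwo Q)

theorem IsPolyMap.iteratedFDeriv_eq_zero {k : ℕ} {F : ℝ × ℝ → ℝ × ℝ} (hF : IsPolyMap k F)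
    {r : ℕ} (hr : k < r) : iteratedFDeriv ℝ r F = 0 := by
  obtain ⟨P, Q, hP, hQ, rfl⟩ := hF.eq_prodMk
  have hcomp (R : MvPolynomial (Fin 2) ℝ) (hR : R.totalDegree < r) :
      iteratedFDeriv ℝ r (fun x => MvPolynomial.eval (prodToFinTwo x) R) = 0 := by
    funext x
    change iteratedFDeriv ℝ r ((fun v => MvPolynomial.eval v R) ∘ prodToFinTwo) x = 0
    rw [prodToFinTwo.iteratedFDeriv_comp_right (AnalyticOnNhd.eval_mvPolynomial R).contDiff x
      (le_refl _), R.iteratedFDeriv_eval_eq_zero hR]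
    rfl
  funext x
  rw [iteratedFDeriv_prodMk (contDiff_eval_prodToFinTwo P).contDiffAt
    (contDiff_eval_prodToFinTwo Q).contDiffAt (le_refl _), hcomp P (by omega), hcomp Q (by omega)]
  rfl

end PolynomialMaps

section ScaledBounds

variable {E F : Type*} [NormedAddCommGroup E] [NormedSpace ℝ E]
  [NormedAddCommGroup F] [NormedSpace ℝ F]

theorem norm_iteratedFDeriv_smul_le_zpow {s : Set E} (hs : IsOpen s) {x : E} (hx : x ∈ s)
    {f : E → ℝ} {g : E → F} (hf : ContDiffOn ℝ ∞ f s) (hg : ContDiffOn ℝ ∞ g s)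
    {n : ℕ} {a b h : ℝ} {p q : ℤ} (hh : 0 < h)
    (hfx : ∀ j ≤ n, ‖iteratedFDeriv ℝ j f x‖ ≤ a * h ^ ((j : ℤ) + p))
    (hgx : ∀ j ≤ n, ‖iteratedFDeriv ℝ j g x‖ ≤ b * h ^ ((j : ℤ) + q)) :
    ‖iteratedFDeriv ℝ n (fun y => f y • g y) x‖ ≤ 2 ^ n * a * b * h ^ ((n : ℤ) + p + q) := by
  simp only [← iteratedFDerivWithin_of_isOpen _ hs hx] at hfx hgx ⊢
  calc ‖iteratedFDerivWithin ℝ n (fun y => f y • g y) s x‖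
      ≤ ∑ i ∈ Finset.range (n + 1), (n.choose i : ℝ) * ‖iteratedFDerivWithin ℝ i f s x‖ *
          ‖iteratedFDerivWithin ℝ (n - i) g s x‖ :=
        norm_iteratedFDerivWithin_smul_le hf hg hs.uniqueDiffOn hx
          (WithTop.coe_le_coe.mpr le_top)
    _ ≤ ∑ i ∈ Finset.range (n + 1), (n.choose i : ℝ) * (a * h ^ ((i : ℤ) + p)) *
          (b * h ^ (((n - i : ℕ) : ℤ) + q)) := by
        refine Finset.sum_le_sum fun i hi => ?_
        have hfi := hfx i (Nat.lt_succ_iff.mp (Finset.mem_range.mp hi))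
        have hgi := hgx (n - i) (Nat.sub_le n i)
        have := (norm_nonneg _).trans hfi
        gcongr
    _ = ∑ i ∈ Finset.range (n + 1), (n.choose i : ℝ) * (a * b * h ^ ((n : ℤ) + p + q)) := by
        refine Finset.sum_congr rfl fun i hi => ?_
        have hin : i ≤ n := Nat.lt_succ_iff.mp (Finset.mem_range.mp hi)
        rw [show (n : ℤ) + p + q = ((i : ℤ) + p) + (((n - i : ℕ) : ℤ) + q) by
            push_cast [hin]; ring, zpow_add₀ hh.ne' ((i : ℤ) + p)]
        ring
    _ = 2 ^ n * a * b * h ^ ((n : ℤ) + p + q) := by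
        rw [← Finset.sum_mul, ← Nat.cast_sum, Nat.sum_range_choose]
        push_cast
        ring

end ScaledBounds

section Determinant

open ContinuousLinearMap

variable {E : Type*} [NormedAddCommGroup E] [NormedSpace ℝ E]

theorem det_toLinearMap_prod (L : ℝ × ℝ →L[ℝ] ℝ × ℝ) :
    LinearMap.det (L : ℝ × ℝ →ₗ[ℝ] ℝ × ℝ)
      = (L (1, 0)).1 * (L (0, 1)).2 - (L (1, 0)).2 * (L (0, 1)).1 := by
  rw [← LinearMap.det_toMatrix (Module.Basis.finTwoProd ℝ), Matrix.det_fin_two]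
  simp only [LinearMap.toMatrix_apply, Module.Basis.finTwoProd_zero,
    Module.Basis.finTwoProd_one, Module.Basis.coe_finTwoProd_repr, ContinuousLinearMap.coe_coe,
    Matrix.cons_val_zero, Matrix.cons_val_one, Matrix.cons_val_fin_one]
  ring

theorem norm_iteratedFDeriv_apply_comp_le {F G H : Type*} [NormedAddCommGroup F]
    [NormedSpace ℝ F] [NormedAddCommGroup G] [NormedSpace ℝ G] [NormedAddCommGroup H]
    [NormedSpace ℝ H] (π : G →L[ℝ] H) {g : E → F →L[ℝ] G} (hg : ContDiff ℝ ∞ g) (v : F)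
    (x : E) (n : ℕ) :
    ‖iteratedFDeriv ℝ n (fun y => π (g y v)) x‖ ≤ ‖π‖ * (‖v‖ * ‖iteratedFDeriv ℝ n g x‖) := by
  have hn : (n : WithTop ℕ∞) ≤ ∞ := WithTop.coe_le_coe.mpr le_top
  calc ‖iteratedFDeriv ℝ n (π ∘ fun y => g y v) x‖
      ≤ ‖π‖ * ‖iteratedFDeriv ℝ n (fun y => g y v) x‖ :=
        π.norm_iteratedFDeriv_comp_left (hg.clm_apply contDiff_const).contDiffAt hn
    _ ≤ ‖π‖ * (‖v‖ * ‖iteratedFDeriv ℝ n g x‖) := by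
        gcongr
        exact norm_iteratedFDeriv_clm_apply_const hg.contDiffAt hn

theorem contDiff_det_comp {g : E → ℝ × ℝ →L[ℝ] ℝ × ℝ} (hg : ContDiff ℝ ∞ g) :
    ContDiff ℝ ∞ fun y => LinearMap.det (g y : ℝ × ℝ →ₗ[ℝ] ℝ × ℝ) := by
  simp_rw [det_toLinearMap_prod]
  fun_prop

theorem norm_iteratedFDeriv_det_comp_le {g : E → ℝ × ℝ →L[ℝ] ℝ × ℝ} (hg : ContDiff ℝ ∞ g)
    {x : E} {n : ℕ} {a h : ℝ} (hh : 0 < h)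
    (hgx : ∀ j ≤ n, ‖iteratedFDeriv ℝ j g x‖ ≤ a * h ^ ((j : ℤ) + 1)) :
    ‖iteratedFDeriv ℝ n (fun y => LinearMap.det (g y : ℝ × ℝ →ₗ[ℝ] ℝ × ℝ)) x‖
      ≤ 2 ^ (n + 1) * a ^ 2 * h ^ ((n : ℤ) + 2) := by
  have hentry (π : ℝ × ℝ →L[ℝ] ℝ) (hπ : ‖π‖ ≤ 1) (v : ℝ × ℝ) (hv : ‖v‖ ≤ 1) :
      ∀ j ≤ n, ‖iteratedFDeriv ℝ j (fun y => π (g y v)) x‖ ≤ a * h ^ ((j : ℤ) + 1) := by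
    intro j hj
    refine (norm_iteratedFDeriv_apply_comp_le π hg v x j).trans ?_
    have := (norm_nonneg _).trans (hgx j hj)
    calc ‖π‖ * (‖v‖ * ‖iteratedFDeriv ℝ j g x‖) ≤ 1 * (1 * (a * h ^ ((j : ℤ) + 1))) := by
          gcongr; exact hgx j hj
      _ = a * h ^ ((j : ℤ) + 1) := by ring
  have hprod (π σ : ℝ × ℝ →L[ℝ] ℝ) (hπ : ‖π‖ ≤ 1) (hσ : ‖σ‖ ≤ 1) :
      ‖iteratedFDeriv ℝ n (fun y => π (g y (1, 0)) * σ (g y (0, 1))) x‖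
        ≤ 2 ^ n * a ^ 2 * h ^ ((n : ℤ) + 2) := by
    have hv₁ : ‖((1 : ℝ), (0 : ℝ))‖ ≤ 1 := by simp [Prod.norm_def]
    have hv₂ : ‖((0 : ℝ), (1 : ℝ))‖ ≤ 1 := by simp [Prod.norm_def]
    refine (norm_iteratedFDeriv_smul_le_zpow isOpen_univ (mem_univ x) (by fun_prop)
      (by fun_prop) hh (hentry π hπ _ hv₁) (hentry σ hσ _ hv₂)).trans_eq ?_
    ring_nf
  have hg' : ContDiff ℝ n g := hg.of_le (WithTop.coe_le_coe.mpr le_top)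
  simp_rw [det_toLinearMap_prod]
  rw [← Pi.sub_def, iteratedFDeriv_sub_apply (by fun_prop) (by fun_prop)]
  calc _ ≤ _ := norm_sub_le _ _
    _ ≤ 2 ^ n * a ^ 2 * h ^ ((n : ℤ) + 2) + 2 ^ n * a ^ 2 * h ^ ((n : ℤ) + 2) :=
        add_le_add (hprod _ _ (norm_fst_le ℝ ℝ ℝ) (norm_snd_le ℝ ℝ ℝ))
          (hprod _ _ (norm_snd_le ℝ ℝ ℝ) (norm_fst_le ℝ ℝ ℝ))
    _ = 2 ^ (n + 1) * a ^ 2 * h ^ ((n : ℤ) + 2) := by ring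

end Determinant

section Inverse

variable {E : Type*} [NormedAddCommGroup E] [NormedSpace ℝ E]

theorem norm_iteratedFDeriv_inv (j : ℕ) (y : ℝ) :
    ‖iteratedFDeriv ℝ j (Inv.inv : ℝ → ℝ) y‖ = j ! * |y|⁻¹ ^ (j + 1) := by
  rw [norm_iteratedFDeriv_eq_norm_iteratedDeriv, iteratedDeriv_eq_iterate, iter_deriv_inv,
    Real.norm_eq_abs, abs_mul, abs_mul, abs_pow, abs_neg, abs_one, one_pow, one_mul,
    Nat.abs_cast, abs_zpow, show (-1 - j : ℤ) = -((j + 1 : ℕ) : ℤ) by push_cast; ring,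
    zpow_neg, zpow_natCast, inv_pow]

theorem norm_iteratedFDeriv_inv_le {s : Set E} (hs : IsOpen s) {x : E} (hx : x ∈ s)
    {f : E → ℝ} (hf : ContDiffOn ℝ ∞ f s) (hf0 : ∀ y ∈ s, f y ≠ 0) {n : ℕ} {a c h : ℝ} {p : ℤ}
    (hh : 0 < h) (hc : 0 < c) (hfx : c * h ^ p ≤ f x)
    (hDf : ∀ j, 1 ≤ j → j ≤ n → ‖iteratedFDeriv ℝ j f x‖ ≤ a * h ^ ((j : ℤ) + p)) :
    ∀ i ≤ n, ‖iteratedFDeriv ℝ i (fun y => (f y)⁻¹) x‖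
      ≤ (n ! : ℝ) ^ 2 * max 1 c⁻¹ ^ (n + 1) * max 1 a ^ n * h ^ ((i : ℤ) - p) := by
  intro i hi
  set K := max 1 c⁻¹
  set M := max 1 a
  have hhp : 0 < h ^ p := zpow_pos hh p
  -- rescaling by `h ^ p` makes the derivatives of the denominator bounded by powers of `M * h`
  set g : E → ℝ := fun y => (h ^ p)⁻¹ • f y with hg_def
  have hgx : c ≤ g x := by
    change c ≤ (h ^ p)⁻¹ * f x
    rw [le_inv_mul_iff₀ hhp, mul_comm]
    exact hfx
  have hg0 : ∀ y ∈ s, g y ≠ 0 := fun y hy => smul_ne_zero (inv_ne_zero hhp.ne') (hf0 y hy)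
  have hg : ContDiffOn ℝ ∞ g s := hf.const_smul _
  have hDg : ∀ j, 1 ≤ j → j ≤ i → ‖iteratedFDerivWithin ℝ j g s x‖ ≤ (M * h) ^ j := by
    intro j hj1 hji
    rw [iteratedFDerivWithin_of_isOpen j hs hx, hg_def,
      iteratedFDeriv_const_smul_apply' ((hf.contDiffAt (hs.mem_nhds hx)).of_le
        (WithTop.coe_le_coe.mpr le_top)), norm_smul, norm_inv, Real.norm_of_nonneg hhp.le]
    calc (h ^ p)⁻¹ * ‖iteratedFDeriv ℝ j f x‖ ≤ (h ^ p)⁻¹ * (a * h ^ ((j : ℤ) + p)) := by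
          gcongr; exact hDf j hj1 (hji.trans hi)
      _ = a * h ^ j := by
          rw [zpow_add₀ hh.ne', zpow_natCast]; field_simp
      _ ≤ M ^ j * h ^ j := by
          gcongr
          exact (le_max_right 1 a).trans (le_self_pow₀ (le_max_left 1 a) (by omega))
      _ = (M * h) ^ j := (mul_pow M h j).symm
  have hDinv : ∀ j ≤ i, ‖iteratedFDerivWithin ℝ j Inv.inv {0}ᶜ (g x)‖ ≤ n ! * K ^ (n + 1) := by
    intro j hji
    have hgx0 : 0 < g x := hc.trans_le hgx
    rw [iteratedFDerivWithin_of_isOpen j isOpen_compl_singleton hgx0.ne',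
      norm_iteratedFDeriv_inv, abs_of_pos hgx0]
    have hK : (g x)⁻¹ ≤ K := (inv_anti₀ hc hgx).trans (le_max_right 1 c⁻¹)
    calc (j ! : ℝ) * (g x)⁻¹ ^ (j + 1) ≤ n ! * K ^ (j + 1) := by
          gcongr
          omega
      _ ≤ n ! * K ^ (n + 1) := by
          gcongr
          · exact le_max_left 1 c⁻¹
          · omega
  have hcomp := norm_iteratedFDerivWithin_comp_le (contDiffOn_inv ℝ) hg
    (WithTop.coe_le_coe.mpr le_top)
    isOpen_compl_singleton.uniqueDiffOn hs.uniqueDiffOn hg0 hx hDinv hDg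
  have hinv : (fun y => (f y)⁻¹) = fun y => (h ^ p)⁻¹ • (Inv.inv ∘ g) y := by
    funext y
    simp only [g, Function.comp_apply, smul_eq_mul, mul_inv, inv_inv]
    field_simp
  have hcd : ContDiffAt ℝ i (Inv.inv ∘ g) x :=
    ((hg.inv hg0).contDiffAt (hs.mem_nhds hx)).of_le (WithTop.coe_le_coe.mpr le_top)
  rw [hinv, iteratedFDeriv_const_smul_apply' hcd, norm_smul, norm_inv,
    Real.norm_of_nonneg hhp.le, ← iteratedFDerivWithin_of_isOpen i hs hx]
  calc (h ^ p)⁻¹ * ‖iteratedFDerivWithin ℝ i (Inv.inv ∘ g) s x‖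
      ≤ (h ^ p)⁻¹ * (i ! * (n ! * K ^ (n + 1)) * (M * h) ^ i) := by gcongr
    _ ≤ (h ^ p)⁻¹ * (n ! * (n ! * K ^ (n + 1)) * (M ^ n * h ^ i)) := by
        rw [mul_pow]
        gcongr
        · exact le_max_left 1 a
    _ = (n ! : ℝ) ^ 2 * K ^ (n + 1) * M ^ n * h ^ ((i : ℤ) - p) := by
        rw [zpow_sub₀ hh.ne', zpow_natCast]
        ring

end Inverse

theorem stmt0_general (k m : ℕ) (CF c₁ c₂ : ℝ)
    (hCF : 0 < CF) (hc₁ : 0 < c₁) :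
    ∃ C : ℝ, 0 < C ∧ ∀ h : ℝ, h ∈ Set.Ioc (0 : ℝ) 1 → ∀ F : ℝ × ℝ → ℝ × ℝ,
      IsPolyMap k F → Set.InjOn F (closure Tref) →
      (∀ r : ℕ, r ≤ k → ∀ x ∈ Tref, ‖iteratedFDeriv ℝ r F x‖ ≤ CF * h ^ r) →
      (∀ x ∈ closure Tref, c₁ * h ^ 2 ≤ jacDet F x ∧ jacDet F x ≤ c₂ * h ^ 2) →
      ∀ x ∈ Tref, ‖iteratedFDeriv ℝ m (Amap F) x‖ ≤ C * h ^ ((m : ℤ) - 1) := by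
  refine ⟨2 ^ m * ((m ! : ℝ) ^ 2 * max 1 c₁⁻¹ ^ (m + 1) * max 1 (2 ^ (m + 1) * CF ^ 2) ^ m)
    * CF, by positivity, ?_⟩
  rintro h ⟨hh, -⟩ F hF - hFr hdet x hx
  have hDF : ContDiff ℝ ∞ (fderiv ℝ F) := hF.contDiff.fderiv_right le_rfl
  have hDFx (j : ℕ) : ‖iteratedFDeriv ℝ j (fderiv ℝ F) x‖ ≤ CF * h ^ ((j : ℤ) + 1) := by
    rw [norm_iteratedFDeriv_fderiv]
    rcases le_or_gt (j + 1) k with hj | hj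
    · exact_mod_cast hFr (j + 1) hj x hx
    · rw [hF.iteratedFDeriv_eq_zero hj, Pi.zero_apply, norm_zero]
      positivity
  have hJ : ContDiff ℝ ∞ (jacDet F) := contDiff_det_comp hDF
  have hJx (j : ℕ) (hj : j ≤ m) :
      ‖iteratedFDeriv ℝ j (jacDet F) x‖ ≤ 2 ^ (m + 1) * CF ^ 2 * h ^ ((j : ℤ) + 2) := by
    refine (norm_iteratedFDeriv_det_comp_le hDF hh fun i _ => hDFx i).trans ?_
    gcongr
    · norm_num
  have hs : IsOpen {y | jacDet F y ≠ 0} := isOpen_ne_fun hJ.continuous continuous_const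
  have hJlow : c₁ * h ^ 2 ≤ jacDet F x := (hdet x (subset_closure hx)).1
  have hxs : jacDet F x ≠ 0 := ((mul_pos hc₁ (pow_pos hh 2)).trans_le hJlow).ne'
  have hinv := norm_iteratedFDeriv_inv_le hs hxs hJ.contDiffOn (fun _ hy => hy) (p := 2) hh hc₁
    (by exact_mod_cast hJlow) (fun j _ => hJx j)
  have hA := norm_iteratedFDeriv_smul_le_zpow (f := fun y => (jacDet F y)⁻¹) hs hxs
    (hJ.contDiffOn.inv fun _ hy => hy) hDF.contDiffOn hh (p := -2) (q := 1)
    (fun j hj => by simpa [sub_eq_add_neg] using hinv j hj) (fun j _ => hDFx j)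
  refine hA.trans_eq ?_
  congr 2
  ring

/-- Bound `|A|_{W^{m,∞}(T̂)} ≤ C h^{m-1}` for the Piola matrix `A = DF / det DF`. -/
theorem stmt0 (k m : ℕ) (hk : 2 ≤ k) (CF c₁ c₂ : ℝ)
    (hCF : 0 < CF) (hc₁ : 0 < c₁) (hc₂ : 0 < c₂) :
    ∃ C : ℝ, 0 < C ∧ ∀ h : ℝ, h ∈ Set.Ioc (0 : ℝ) 1 → ∀ F : ℝ × ℝ → ℝ × ℝ,
      IsPolyMap k F → Set.InjOn F (closure Tref) →
      (∀ r : ℕ, r ≤ k → ∀ x ∈ Tref, ‖iteratedFDeriv ℝ r F x‖ ≤ CF * h ^ r) →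
      (∀ x ∈ closure Tref, c₁ * h ^ 2 ≤ jacDet F x ∧ jacDet F x ≤ c₂ * h ^ 2) →
      ∀ x ∈ Tref, ‖iteratedFDeriv ℝ m (Amap F) x‖ ≤ C * h ^ ((m : ℤ) - 1) :=
  stmt0_general k m CF c₁ c₂ hCF hc₁
end
end

section
/- Fix an integer k ≥ 2, an integer m with 0 ≤ m ≤ k−1, and constants C_F, c₁, c₂ > 0. There exists a constant C > 0, depending only on k, m, C_F, c₁, c₂, such that for every h ∈ (0,1] and every map F : ℝ² → ℝ² whose two components are polynomials of total degree ≤ k, which is injective on the closure of T̂ and satisfies |F|_{W^{r,∞}(T̂)} ≤ C_F h^r for 0 ≤ r ≤ k and c₁h² ≤ det DF(x) ≤ c₂h² for all x in the closure of T̂, the matrix-valued map B(x) := det DF(x) · (DF(x))⁻¹ satisfies |B|_{W^{m,∞}(T̂)} ≤ C h^{1+m}; moreover every entry of B is a polynomial of total degree ≤ k−1 (B is the adjugate of DF), so that D^r B(x) = 0 for every x and every r ≥ k. -/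
open Set MeasureTheory Function

noncomputable section

/-!
On a plane, Cayley–Hamilton gives `det A • A⁻¹ = tr A • 1 - A`, which is linear in `A`. Where
`det DF ≠ 0`, `B` is therefore a fixed continuous linear map applied to `DF`, so
`‖D^m B‖ ≤ C ‖D^{m+1} F‖ ≤ C C_F h^{m+1}`, and `D^r B = 0` as soon as `D^{r+1} F = 0`, that is
for `r ≥ k`. The entries of `tr DF • 1 - DF` are, up to sign, first partial derivatives of the
components of `F`, hence polynomials of degree `≤ k - 1`.
-/

namespace MvPolynomial

theorem totalDegree_pderiv_le {σ R : Type*} [CommSemiring R] (p : MvPolynomial σ R) (i : σ) :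
    (pderiv i p).totalDegree ≤ p.totalDegree - 1 := by
  classical
  conv_lhs => rw [p.as_sum]
  rw [map_sum]
  refine (totalDegree_finsetSum _ _).trans (Finset.sup_le fun s hs => ?_)
  rw [pderiv_monomial]
  by_cases hsi : s i = 0
  · simp [hsi]
  have hs_split : s = (s - Finsupp.single i 1) + Finsupp.single i 1 :=
    (tsub_add_cancel_of_le (Finsupp.single_le_iff.2 (Nat.one_le_iff_ne_zero.2 hsi))).symm
  have hdeg : (s - Finsupp.single i 1).degree + 1 ≤ p.totalDegree := by
    have hs_le : s.degree ≤ p.totalDegree := le_totalDegree hs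
    rwa [hs_split, map_add, Finsupp.degree_single] at hs_le
  exact (totalDegree_monomial_le _ _).trans (Nat.le_sub_one_of_lt hdeg)

variable {σ 𝕜 : Type*} [NontriviallyNormedField 𝕜] [Fintype σ]

theorem hasFDerivAt_eval (p : MvPolynomial σ 𝕜) (x : σ → 𝕜) :
    HasFDerivAt (fun y => eval y p)
      (∑ i, eval x (pderiv i p) • ContinuousLinearMap.proj (R := 𝕜) (φ := fun _ : σ => 𝕜) i) x := by
  classical
  induction p using MvPolynomial.induction_on with
  | C a => convert hasFDerivAt_const (𝕜 := 𝕜) a x using 1 <;> ext <;> simp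
  | add p q hp hq =>
    convert hp.add hq using 1 <;> ext <;> simp [add_mul, Finset.sum_add_distrib]
  | mul_X p i hp =>
    rw [show (fun y => eval y (p * X i)) = fun y => eval y p * y i by ext; simp]
    refine (hp.mul (hasFDerivAt_apply i x)).congr_fderiv ?_
    ext v
    simp [Pi.single_apply, add_mul, Finset.sum_add_distrib, Finset.mul_sum, apply_ite (eval x),
      ite_mul, mul_assoc]

theorem contDiff_eval (p : MvPolynomial σ 𝕜) {n : WithTop ℕ∞} :
    ContDiff 𝕜 n (fun x : σ → 𝕜 => eval x p) :=
  (AnalyticOnNhd.eval_continuousLinearMap (ContinuousLinearMap.id 𝕜 (σ → 𝕜)) p).contDiff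

theorem iteratedFDeriv_eval_succ_eq_zero {p : MvPolynomial σ 𝕜} {n : ℕ}
    (h : ∀ i, iteratedFDeriv 𝕜 n (fun x => eval x (pderiv i p)) = 0) :
    iteratedFDeriv 𝕜 (n + 1) (fun x => eval x p) = 0 := by
  have hD : fderiv 𝕜 (fun x => eval x p) = fun y => ∑ i, eval y (pderiv i p) •
      ContinuousLinearMap.proj (R := 𝕜) (φ := fun _ : σ => 𝕜) i := by
    ext1 y
    exact (hasFDerivAt_eval p y).fderiv
  ext1 x
  rw [iteratedFDeriv_succ_eq_comp_right, Function.comp_apply, hD,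
    iteratedFDeriv_fun_sum_apply fun i _ => (contDiff_eval _).contDiffAt.smul_const _]
  ext
  simp [iteratedFDeriv_smul_const_apply (𝕜 := 𝕜) (A := 𝕜) (contDiff_eval (pderiv _ p)).contDiffAt,
    h]

theorem iteratedFDeriv_eval_eq_zero_s1 {p : MvPolynomial σ 𝕜} {d : ℕ} (hp : p.totalDegree ≤ d) :
    iteratedFDeriv 𝕜 (d + 1) (fun x => eval x p) = 0 := by
  induction d generalizing p with
  | zero =>
    rw [Nat.le_zero, totalDegree_eq_zero_iff_eq_C] at hp
    refine iteratedFDeriv_eval_succ_eq_zero fun i => ?_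
    rw [hp, pderiv_C]
    ext1 x
    simp
  | succ d ih =>
    exact iteratedFDeriv_eval_succ_eq_zero fun i =>
      ih ((totalDegree_pderiv_le p i).trans (by omega))

end MvPolynomial

open Polynomial in
theorem LinearMap.mul_trace_smul_one_sub {R M : Type*} [CommRing R] [Nontrivial R]
    [AddCommGroup M] [Module R M] [Module.Free R M] [Module.Finite R M]
    (hM : Module.finrank R M = 2) (f : M →ₗ[R] M) :
    f * (LinearMap.trace R M f • 1 - f) = LinearMap.det f • 1 := by
  let b := Module.Free.chooseBasis R M
  have hcard : Fintype.card (Module.Free.ChooseBasisIndex R M) = 2 := by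
    rw [← Module.finrank_eq_card_chooseBasisIndex, hM]
  have hcharpoly :
      f.charpoly = X ^ 2 - C (LinearMap.trace R M f) * X + C (LinearMap.det f) := by
    rw [LinearMap.charpoly_def, Matrix.charpoly_of_card_eq_two (M := _) hcard,
      LinearMap.trace_eq_matrix_trace R b, LinearMap.det_toMatrix]
  have hCH := LinearMap.aeval_self_charpoly f
  simp only [hcharpoly, map_add, map_sub, map_mul, aeval_X, aeval_C, map_pow,
    Algebra.algebraMap_eq_smul_one] at hCH
  rw [← sub_eq_zero, ← neg_eq_zero, ← hCH, mul_sub, mul_smul_comm, mul_one, pow_two,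
    smul_mul_assoc, one_mul]
  abel

theorem LinearMap.trace_prod_self {R : Type*} [CommRing R] (f : (R × R) →ₗ[R] (R × R)) :
    LinearMap.trace R (R × R) f = (f (1, 0)).1 + (f (0, 1)).2 := by
  rw [LinearMap.trace_eq_matrix_trace R (Module.Basis.finTwoProd R), Matrix.trace_fin_two]
  simp [LinearMap.toMatrix_apply]

namespace ContinuousLinearMap

variable {𝕜 E : Type*} [NontriviallyNormedField 𝕜] [CompleteSpace 𝕜] [NormedAddCommGroup E]
  [NormedSpace 𝕜 E] [FiniteDimensional 𝕜 E]

def planeAdjugate : (E →L[𝕜] E) →L[𝕜] (E →L[𝕜] E) :=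
  LinearMap.toContinuousLinearMap
    ((LinearMap.trace 𝕜 E ∘ₗ ContinuousLinearMap.coeLM 𝕜).smulRight 1 - LinearMap.id)

theorem planeAdjugate_apply (A : E →L[𝕜] E) :
    planeAdjugate A = LinearMap.trace 𝕜 E A • 1 - A := rfl

theorem mul_planeAdjugate (hE : Module.finrank 𝕜 E = 2) (A : E →L[𝕜] E) :
    A * planeAdjugate A = LinearMap.det (A : E →ₗ[𝕜] E) • 1 := by
  ext v
  exact LinearMap.congr_fun (LinearMap.mul_trace_smul_one_sub hE (A : E →ₗ[𝕜] E)) v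

theorem planeAdjugate_mul (hE : Module.finrank 𝕜 E = 2) (A : E →L[𝕜] E) :
    planeAdjugate A * A = LinearMap.det (A : E →ₗ[𝕜] E) • 1 := by
  rw [← mul_planeAdjugate hE, planeAdjugate_apply, sub_mul, mul_sub, smul_mul_assoc,
    mul_smul_comm, one_mul, mul_one]

theorem det_smul_inverse_eq_planeAdjugate (hE : Module.finrank 𝕜 E = 2) {A : E →L[𝕜] E}
    (hA : LinearMap.det (A : E →ₗ[𝕜] E) ≠ 0) :
    LinearMap.det (A : E →ₗ[𝕜] E) • Ring.inverse A = planeAdjugate A := by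
  set d := LinearMap.det (A : E →ₗ[𝕜] E)
  let u : (E →L[𝕜] E)ˣ :=
    ⟨A, d⁻¹ • planeAdjugate A,
      by rw [mul_smul_comm, mul_planeAdjugate hE, smul_smul, inv_mul_cancel₀ hA, one_smul],
      by rw [smul_mul_assoc, planeAdjugate_mul hE, smul_smul, inv_mul_cancel₀ hA, one_smul]⟩
  change d • Ring.inverse (u : E →L[𝕜] E) = _
  rw [Ring.inverse_unit]
  change d • (d⁻¹ • planeAdjugate A) = _
  rw [smul_smul, mul_inv_cancel₀ hA, one_smul]

theorem planeAdjugate_apply_one_zero (A : (𝕜 × 𝕜) →L[𝕜] (𝕜 × 𝕜)) :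
    planeAdjugate A (1, 0) = ((A (0, 1)).2, -(A (1, 0)).2) := by
  ext <;> simp [planeAdjugate_apply, LinearMap.trace_prod_self]

theorem planeAdjugate_apply_zero_one (A : (𝕜 × 𝕜) →L[𝕜] (𝕜 × 𝕜)) :
    planeAdjugate A (0, 1) = (-(A (0, 1)).1, (A (1, 0)).1) := by
  ext <;> simp [planeAdjugate_apply, LinearMap.trace_prod_self]

end ContinuousLinearMap

theorem norm_iteratedFDeriv_comp_fderiv_le {𝕜 E F G : Type*} [NontriviallyNormedField 𝕜]
    [NormedAddCommGroup E] [NormedSpace 𝕜 E] [NormedAddCommGroup F] [NormedSpace 𝕜 F]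
    [NormedAddCommGroup G] [NormedSpace 𝕜 G] (L : (E →L[𝕜] F) →L[𝕜] G) {f : E → F} {m : ℕ}
    (hf : ContDiff 𝕜 (m + 1) f) (x : E) :
    ‖iteratedFDeriv 𝕜 m (L ∘ fderiv 𝕜 f) x‖ ≤ ‖L‖ * ‖iteratedFDeriv 𝕜 (m + 1) f x‖ := by
  rw [L.iteratedFDeriv_comp_left (hf.fderiv_right le_rfl).contDiffAt le_rfl,
    ← norm_iteratedFDeriv_fderiv]
  exact L.norm_compContinuousMultilinearMap_le _

section PolyMap

open MvPolynomial

variable {𝕜 : Type*} [NontriviallyNormedField 𝕜]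

def polyMap (P Q : MvPolynomial (Fin 2) 𝕜) : 𝕜 × 𝕜 → 𝕜 × 𝕜 :=
  fun x => (eval ![x.1, x.2] P, eval ![x.1, x.2] Q)

section EvalPair

variable (p : MvPolynomial (Fin 2) 𝕜)

theorem eval_pair_eq_comp :
    (fun x : 𝕜 × 𝕜 => eval ![x.1, x.2] p) =
      (fun y => eval y p) ∘ ((ContinuousLinearEquiv.finTwoArrow 𝕜 𝕜).symm : 𝕜 × 𝕜 →L[𝕜] Fin 2 → 𝕜) :=
  rfl

theorem contDiff_eval_pair {n : WithTop ℕ∞} :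
    ContDiff 𝕜 n (fun x : 𝕜 × 𝕜 => eval ![x.1, x.2] p) := by
  rw [eval_pair_eq_comp]
  exact (contDiff_eval p).comp (ContinuousLinearMap.contDiff _)

theorem hasFDerivAt_eval_pair (x : 𝕜 × 𝕜) :
    HasFDerivAt (fun x : 𝕜 × 𝕜 => eval ![x.1, x.2] p)
      (eval ![x.1, x.2] (pderiv 0 p) • ContinuousLinearMap.fst 𝕜 𝕜 𝕜 +
        eval ![x.1, x.2] (pderiv 1 p) • ContinuousLinearMap.snd 𝕜 𝕜 𝕜) x := by
  rw [eval_pair_eq_comp]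
  refine ((hasFDerivAt_eval p _).comp x (ContinuousLinearMap.hasFDerivAt _)).congr_fderiv ?_
  ext <;> simp

theorem iteratedFDeriv_eval_pair_eq_zero {d : ℕ} (hp : p.totalDegree ≤ d) (x : 𝕜 × 𝕜) :
    iteratedFDeriv 𝕜 (d + 1) (fun x : 𝕜 × 𝕜 => eval ![x.1, x.2] p) x = 0 := by
  rw [eval_pair_eq_comp, ContinuousLinearMap.iteratedFDeriv_comp_right _ (contDiff_eval p) x
    le_top, iteratedFDeriv_eval_eq_zero_s1 hp]
  rfl

end EvalPair

variable (P Q : MvPolynomial (Fin 2) 𝕜)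

theorem contDiff_polyMap {n : WithTop ℕ∞} : ContDiff 𝕜 n (polyMap P Q) :=
  (contDiff_eval_pair P).prodMk (contDiff_eval_pair Q)

theorem iteratedFDeriv_polyMap_eq_zero {d : ℕ} (hP : P.totalDegree ≤ d)
    (hQ : Q.totalDegree ≤ d) (x : 𝕜 × 𝕜) :
    iteratedFDeriv 𝕜 (d + 1) (polyMap P Q) x = 0 := by
  unfold polyMap
  rw [iteratedFDeriv_prodMk (contDiff_eval_pair P).contDiffAt
    (contDiff_eval_pair Q).contDiffAt le_rfl, iteratedFDeriv_eval_pair_eq_zero P hP,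
    iteratedFDeriv_eval_pair_eq_zero Q hQ]
  rfl

theorem fderiv_polyMap_apply_one_zero (x : 𝕜 × 𝕜) :
    fderiv 𝕜 (polyMap P Q) x (1, 0) = polyMap (pderiv 0 P) (pderiv 0 Q) x := by
  unfold polyMap
  rw [((hasFDerivAt_eval_pair P x).prodMk (hasFDerivAt_eval_pair Q x)).fderiv]
  simp

theorem fderiv_polyMap_apply_zero_one (x : 𝕜 × 𝕜) :
    fderiv 𝕜 (polyMap P Q) x (0, 1) = polyMap (pderiv 1 P) (pderiv 1 Q) x := by
  unfold polyMap
  rw [((hasFDerivAt_eval_pair P x).prodMk (hasFDerivAt_eval_pair Q x)).fderiv]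
  simp

def adjugatePoly : Fin 2 → Fin 2 → MvPolynomial (Fin 2) 𝕜 :=
  ![![pderiv 1 Q, -pderiv 1 P], ![-pderiv 0 Q, pderiv 0 P]]

theorem totalDegree_adjugatePoly_le (i j : Fin 2) :
    (adjugatePoly P Q i j).totalDegree ≤ max P.totalDegree Q.totalDegree - 1 := by
  fin_cases i <;> fin_cases j <;>
    simp only [adjugatePoly, Fin.zero_eta, Fin.mk_one, Matrix.cons_val_zero, Matrix.cons_val_one,
      totalDegree_neg] <;>
    exact (totalDegree_pderiv_le _ _).trans (by omega)

variable [CompleteSpace 𝕜]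

theorem planeAdjugate_fderiv_polyMap_apply_one_zero (x : 𝕜 × 𝕜) :
    ContinuousLinearMap.planeAdjugate (fderiv 𝕜 (polyMap P Q) x) (1, 0) =
      (eval ![x.1, x.2] (adjugatePoly P Q 0 0), eval ![x.1, x.2] (adjugatePoly P Q 1 0)) := by
  rw [ContinuousLinearMap.planeAdjugate_apply_one_zero, fderiv_polyMap_apply_one_zero,
    fderiv_polyMap_apply_zero_one]
  simp [polyMap, adjugatePoly]

theorem planeAdjugate_fderiv_polyMap_apply_zero_one (x : 𝕜 × 𝕜) :
    ContinuousLinearMap.planeAdjugate (fderiv 𝕜 (polyMap P Q) x) (0, 1) =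
      (eval ![x.1, x.2] (adjugatePoly P Q 0 1), eval ![x.1, x.2] (adjugatePoly P Q 1 1)) := by
  rw [ContinuousLinearMap.planeAdjugate_apply_zero_one, fderiv_polyMap_apply_one_zero,
    fderiv_polyMap_apply_zero_one]
  simp [polyMap, adjugatePoly]

end PolyMap

theorem isOpen_Tref : IsOpen Tref :=
  (isOpen_lt continuous_const continuous_fst).inter
    ((isOpen_lt continuous_const continuous_snd).inter
      (isOpen_lt (continuous_fst.add continuous_snd) continuous_const))

theorem stmt1_general (k m : ℕ) (hk : 2 ≤ k) (hm : m ≤ k - 1) (CF c₁ c₂ : ℝ)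
    (hCF : 0 < CF) (hc₁ : 0 < c₁) :
    ∃ C : ℝ, 0 < C ∧ ∀ h : ℝ, h ∈ Set.Ioc (0 : ℝ) 1 → ∀ F : ℝ × ℝ → ℝ × ℝ,
      IsPolyMap k F → Set.InjOn F (closure Tref) →
      (∀ r : ℕ, r ≤ k → ∀ x ∈ Tref, ‖iteratedFDeriv ℝ r F x‖ ≤ CF * h ^ r) →
      (∀ x ∈ closure Tref, c₁ * h ^ 2 ≤ jacDet F x ∧ jacDet F x ≤ c₂ * h ^ 2) →
      (∀ x ∈ Tref, ‖iteratedFDeriv ℝ m (Bmap F) x‖ ≤ C * h ^ (1 + m)) ∧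
      (∃ P : Fin 2 → Fin 2 → MvPolynomial (Fin 2) ℝ,
        (∀ i j : Fin 2, (P i j).totalDegree ≤ k - 1) ∧
        (∀ x ∈ closure Tref,
          Bmap F x (1, 0) =
            (MvPolynomial.eval ![x.1, x.2] (P 0 0), MvPolynomial.eval ![x.1, x.2] (P 1 0)) ∧
          Bmap F x (0, 1) =
            (MvPolynomial.eval ![x.1, x.2] (P 0 1), MvPolynomial.eval ![x.1, x.2] (P 1 1)))) ∧
      (∀ x ∈ Tref, ∀ r : ℕ, k ≤ r → iteratedFDeriv ℝ r (Bmap F) x = 0) := by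
  let adj := ContinuousLinearMap.planeAdjugate (𝕜 := ℝ) (E := ℝ × ℝ)
  refine ⟨(‖adj‖ + 1) * CF, by positivity, ?_⟩
  rintro h ⟨hh, -⟩ F ⟨P, Q, hP, hQ, hF⟩ - hFder hFdet
  obtain rfl : F = polyMap P Q := funext hF
  have hB : ∀ x ∈ closure Tref, Bmap (polyMap P Q) x = adj (fderiv ℝ (polyMap P Q) x) :=
    fun x hx => ContinuousLinearMap.det_smul_inverse_eq_planeAdjugate (by simp)
      ((hFdet x hx).1.trans_lt' (by positivity)).ne'
  have hDB : ∀ x ∈ Tref, ∀ r : ℕ, ‖iteratedFDeriv ℝ r (Bmap (polyMap P Q)) x‖ ≤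
      ‖adj‖ * ‖iteratedFDeriv ℝ (r + 1) (polyMap P Q) x‖ := by
    intro x hx r
    have hev : Bmap (polyMap P Q) =ᶠ[nhds x] adj ∘ fderiv ℝ (polyMap P Q) :=
      Filter.eventually_of_mem (isOpen_Tref.mem_nhds hx) fun y hy => hB y (subset_closure hy)
    rw [(hev.iteratedFDeriv ℝ r).self_of_nhds]
    exact norm_iteratedFDeriv_comp_fderiv_le adj (contDiff_polyMap P Q) x
  refine ⟨fun x hx => ?_, ⟨adjugatePoly P Q, fun i j => ?_, fun x hx => ?_⟩, fun x hx r hr => ?_⟩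
  · calc ‖iteratedFDeriv ℝ m (Bmap (polyMap P Q)) x‖
        ≤ ‖adj‖ * (CF * h ^ (m + 1)) :=
          (hDB x hx m).trans (by gcongr; exact hFder _ (by omega) x hx)
      _ ≤ (‖adj‖ + 1) * CF * h ^ (1 + m) := by rw [add_comm 1 m]; nlinarith [pow_pos hh (m + 1)]
  · exact (totalDegree_adjugatePoly_le P Q i j).trans (by omega)
  · rw [hB x hx]
    exact ⟨planeAdjugate_fderiv_polyMap_apply_one_zero P Q x,
      planeAdjugate_fderiv_polyMap_apply_zero_one P Q x⟩
  · have hDB0 := hDB x hx r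
    rw [iteratedFDeriv_polyMap_eq_zero P Q (hP.trans hr) (hQ.trans hr), norm_zero,
      mul_zero] at hDB0
    exact norm_le_zero_iff.1 hDB0

/-- Bound `|B|_{W^{m,∞}(T̂)} ≤ C h^{1+m}` for `B = det DF · (DF)⁻¹` (the adjugate of `DF`),
together with the fact that the entries of `B` are polynomials of total degree ≤ k−1, so
that all derivatives of order ≥ k vanish. -/
theorem stmt1 (k m : ℕ) (hk : 2 ≤ k) (hm : m ≤ k - 1) (CF c₁ c₂ : ℝ)
    (hCF : 0 < CF) (hc₁ : 0 < c₁) (hc₂ : 0 < c₂) :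
    ∃ C : ℝ, 0 < C ∧ ∀ h : ℝ, h ∈ Set.Ioc (0 : ℝ) 1 → ∀ F : ℝ × ℝ → ℝ × ℝ,
      IsPolyMap k F → Set.InjOn F (closure Tref) →
      (∀ r : ℕ, r ≤ k → ∀ x ∈ Tref, ‖iteratedFDeriv ℝ r F x‖ ≤ CF * h ^ r) →
      (∀ x ∈ closure Tref, c₁ * h ^ 2 ≤ jacDet F x ∧ jacDet F x ≤ c₂ * h ^ 2) →
      (∀ x ∈ Tref, ‖iteratedFDeriv ℝ m (Bmap F) x‖ ≤ C * h ^ (1 + m)) ∧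
      (∃ P : Fin 2 → Fin 2 → MvPolynomial (Fin 2) ℝ,
        (∀ i j : Fin 2, (P i j).totalDegree ≤ k - 1) ∧
        (∀ x ∈ closure Tref,
          Bmap F x (1, 0) =
            (MvPolynomial.eval ![x.1, x.2] (P 0 0), MvPolynomial.eval ![x.1, x.2] (P 1 0)) ∧
          Bmap F x (0, 1) =
            (MvPolynomial.eval ![x.1, x.2] (P 0 1), MvPolynomial.eval ![x.1, x.2] (P 1 1)))) ∧
      (∀ x ∈ Tref, ∀ r : ℕ, k ≤ r → iteratedFDeriv ℝ r (Bmap F) x = 0) :=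
  stmt1_general k m hk hm CF c₁ c₂ hCF hc₁
end
end

section
/- Let k ≥ 2 be an integer and let F : ℝ² → ℝ² be a map with polynomial components of total degree ≤ k that is injective on the closure of T̂ and satisfies det DF(x) ≠ 0 for all x in the closure of T̂. Let ê be one of the three closed edges of T̂, suppose the restriction of F to ê coincides with the restriction of an affine map, and let e := F(ê) (a straight segment) with n a unit vector normal to the line containing e. Let v̂ : ℝ² → ℝ² have polynomial components of total degree ≤ k, and define ṽ on F(closure of T̂) by ṽ(F(x̂)) = A(x̂)v̂(x̂), where A(x̂) := DF(x̂)/det DF(x̂). Then there exists a polynomial P in two variables of total degree ≤ k such that ṽ(x)·n = P(x) for every x ∈ e. -/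
open Set MeasureTheory Function

noncomputable section

/-!
Along the edge `F` agrees with an affine map, so `DF(x̂)` sends the edge direction
`τ = b̂ - â` to the fixed vector `d = F b̂ - F â`. In the plane the normal component `u · n`
is proportional to the cross product `d × u`, and
`d × DF w = DF τ × DF w = det DF · (τ × w)`. Hence on the edge
`ṽ · n = -(n × d)⁻¹ (τ × v̂(x̂))`: the Jacobian cancels and what remains is a polynomial of
degree `≤ k` in `x̂`. Finally, along the edge `x̂` is an affine function of `x = F x̂`, and
substituting polynomials of degree `≤ 1` does not raise the total degree.
-/

theorem MvPolynomial.totalDegree_bind₁_le {σ τ R : Type*} [CommSemiring R]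
    {s : σ → MvPolynomial τ R} (hs : ∀ i, (s i).totalDegree ≤ 1) (p : MvPolynomial σ R) :
    (MvPolynomial.bind₁ s p).totalDegree ≤ p.totalDegree := by
  open MvPolynomial in
  conv_lhs => rw [p.as_sum]
  rw [map_sum]
  refine (totalDegree_finsetSum _ _).trans (Finset.sup_le fun m hm => ?_)
  rw [bind₁_monomial]
  refine (totalDegree_mul _ _).trans ?_
  rw [totalDegree_C, zero_add]
  refine (totalDegree_finsetProd _ _).trans (le_trans ?_ (le_totalDegree hm))
  exact Finset.sum_le_sum fun i _ =>
    (totalDegree_pow _ _).trans (by simpa using Nat.mul_le_mul_left (m i) (hs i))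

def IsPolyFun (k : ℕ) (f : ℝ × ℝ → ℝ) : Prop :=
  ∃ P : MvPolynomial (Fin 2) ℝ, P.totalDegree ≤ k ∧
    ∀ x : ℝ × ℝ, f x = MvPolynomial.eval ![x.1, x.2] P

theorem isPolyMap_iff {k : ℕ} {F : ℝ × ℝ → ℝ × ℝ} :
    IsPolyMap k F ↔ IsPolyFun k (fun x => (F x).1) ∧ IsPolyFun k (fun x => (F x).2) := by
  constructor
  · rintro ⟨P, Q, hP, hQ, hF⟩
    exact ⟨⟨P, hP, fun x => by simp [hF]⟩, ⟨Q, hQ, fun x => by simp [hF]⟩⟩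
  · rintro ⟨⟨P, hP, hF₁⟩, ⟨Q, hQ, hF₂⟩⟩
    exact ⟨P, Q, hP, hQ, fun x => Prod.ext (hF₁ x) (hF₂ x)⟩

theorem isPolyFun_affine (c₀ c₁ c₂ : ℝ) : IsPolyFun 1 (fun y => c₀ + c₁ * y.1 + c₂ * y.2) := by
  open MvPolynomial in
  refine ⟨C c₀ + C c₁ * X 0 + C c₂ * X 1, ?_, fun y => by simp⟩
  refine (totalDegree_add _ _).trans (max_le ((totalDegree_add _ _).trans (max_le ?_ ?_)) ?_)
  · simp
  all_goals exact (totalDegree_mul _ _).trans (by simp)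

namespace IsPolyFun

variable {k : ℕ} {f g : ℝ × ℝ → ℝ}

theorem sub (hf : IsPolyFun k f) (hg : IsPolyFun k g) : IsPolyFun k (fun x => f x - g x) := by
  obtain ⟨P, hP, hfP⟩ := hf
  obtain ⟨Q, hQ, hgQ⟩ := hg
  exact ⟨P - Q, (MvPolynomial.totalDegree_sub _ _).trans (max_le hP hQ),
    fun x => by simp [hfP, hgQ]⟩

theorem const_mul (hf : IsPolyFun k f) (c : ℝ) : IsPolyFun k (fun x => c * f x) := by
  obtain ⟨P, hP, hfP⟩ := hf
  refine ⟨MvPolynomial.C c * P, (MvPolynomial.totalDegree_mul _ _).trans ?_,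
    fun x => by simp [hfP]⟩
  simpa using hP

theorem comp {ψ : ℝ × ℝ → ℝ × ℝ} (hf : IsPolyFun k f) (hψ : IsPolyMap 1 ψ) :
    IsPolyFun k (f ∘ ψ) := by
  obtain ⟨P, hP, hfP⟩ := hf
  obtain ⟨Q₁, Q₂, hQ₁, hQ₂, hψQ⟩ := hψ
  refine ⟨MvPolynomial.bind₁ ![Q₁, Q₂] P,
    (MvPolynomial.totalDegree_bind₁_le (fun i => ?_) P).trans hP, fun y => ?_⟩
  · fin_cases i <;> assumption
  · rw [Function.comp_apply, hfP, hψQ]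
    change _ = MvPolynomial.eval₂Hom (RingHom.id ℝ) _ _
    rw [MvPolynomial.eval₂Hom_bind₁]
    refine congrArg (fun v => MvPolynomial.eval v P) ?_
    ext i; fin_cases i <;> rfl

theorem differentiable (hf : IsPolyFun k f) : Differentiable ℝ f := by
  obtain ⟨P, -, hfP⟩ := hf
  have h := AnalyticOnNhd.eval_continuousLinearMap' (𝕜 := ℝ)
    ![ContinuousLinearMap.fst ℝ ℝ ℝ, ContinuousLinearMap.snd ℝ ℝ ℝ] P
  have hf : f = fun x => MvPolynomial.eval
      (fun i => ![ContinuousLinearMap.fst ℝ ℝ ℝ, ContinuousLinearMap.snd ℝ ℝ ℝ] i x) P := by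
    funext x
    rw [hfP]
    refine congrArg (fun v => MvPolynomial.eval v P) ?_
    ext i; fin_cases i <;> rfl
  exact hf ▸ fun x => (h x trivial).differentiableAt

end IsPolyFun

theorem IsPolyMap.differentiable {k : ℕ} {F : ℝ × ℝ → ℝ × ℝ} (hF : IsPolyMap k F) :
    Differentiable ℝ F :=
  (isPolyMap_iff.1 hF).1.differentiable.prodMk (isPolyMap_iff.1 hF).2.differentiable

theorem sq_fst_add_sq_snd_ne_zero {d : ℝ × ℝ} (hd : d ≠ 0) : d.1 ^ 2 + d.2 ^ 2 ≠ 0 := by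
  intro h
  have h₁ : d.1 = 0 := by nlinarith [sq_nonneg d.1, sq_nonneg d.2]
  have h₂ : d.2 = 0 := by nlinarith [sq_nonneg d.1, sq_nonneg d.2]
  exact hd (Prod.ext h₁ h₂)

open AffineMap in
theorem exists_isPolyMap_one_lineMap_eq {p q : ℝ × ℝ} (hpq : p ≠ q) (a b : ℝ × ℝ) :
    ∃ ψ : ℝ × ℝ → ℝ × ℝ, IsPolyMap 1 ψ ∧ ∀ t : ℝ, ψ (lineMap p q t) = lineMap a b t := by
  have hd : q - p ≠ 0 := sub_ne_zero.2 hpq.symm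
  simp only [lineMap_apply_module' p q]
  generalize q - p = d at hd ⊢
  set s := d.1 ^ 2 + d.2 ^ 2 with hs_def
  have hs : s ≠ 0 := sq_fst_add_sq_snd_ne_zero hd
  -- `t` is recovered from `y = t • d + p` by projecting `y - p` onto `d`
  let param : ℝ × ℝ → ℝ := fun y => ((y - p).1 * d.1 + (y - p).2 * d.2) / s
  refine ⟨fun y => lineMap a b (param y), isPolyMap_iff.2 ⟨?_, ?_⟩, fun t => ?_⟩
  · convert isPolyFun_affine (a.1 - (p.1 * d.1 + p.2 * d.2) / s * (b - a).1)
      (d.1 / s * (b - a).1) (d.2 / s * (b - a).1) using 2 with y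
    simp only [lineMap_apply_module', param, Prod.fst_add, Prod.fst_sub, Prod.snd_sub,
      Prod.smul_fst, smul_eq_mul]
    ring
  · convert isPolyFun_affine (a.2 - (p.1 * d.1 + p.2 * d.2) / s * (b - a).2)
      (d.1 / s * (b - a).2) (d.2 / s * (b - a).2) using 2 with y
    simp only [lineMap_apply_module', param, Prod.snd_add, Prod.fst_sub, Prod.snd_sub,
      Prod.smul_snd, smul_eq_mul]
    ring
  · change lineMap a b (param _) = _
    congr 1
    simp only [param, add_sub_cancel_right, Prod.smul_fst, Prod.smul_snd, smul_eq_mul]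
    rw [div_eq_iff hs, hs_def]
    ring

theorem fderiv_apply_sub_eq_of_eqOn_segment {E G : Type*} [NormedAddCommGroup E]
    [NormedSpace ℝ E] [NormedAddCommGroup G] [NormedSpace ℝ G] {F : E → G}
    {L : E →ᵃ[ℝ] G} {a b x : E} (hL : EqOn F L (segment ℝ a b)) (hx : x ∈ segment ℝ a b)
    (hF : DifferentiableAt ℝ F x) :
    fderiv ℝ F x (b - a) = F b - F a := by
  obtain ⟨t, ht, rfl⟩ := segment_eq_image_lineMap ℝ a b ▸ hx
  have hedge : EqOn (F ∘ AffineMap.lineMap a b) (AffineMap.lineMap (L a) (L b)) (Icc (0 : ℝ) 1) :=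
    fun s hs => by
      rw [comp_apply, hL (segment_eq_image_lineMap ℝ a b ▸ mem_image_of_mem _ hs),
        AffineMap.apply_lineMap]
  have hchain : HasDerivWithinAt (F ∘ AffineMap.lineMap a b)
      (fderiv ℝ F (AffineMap.lineMap a b t) (b - a)) (Icc 0 1) t :=
    (hF.hasFDerivAt.comp_hasDerivAt t AffineMap.hasDerivAt_lineMap).hasDerivWithinAt
  have haff : HasDerivWithinAt (F ∘ AffineMap.lineMap a b) (L b - L a) (Icc 0 1) t :=
    AffineMap.hasDerivWithinAt_lineMap.congr hedge (hedge ht)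
  have hu := uniqueDiffOn_Icc zero_lt_one t ht
  rw [← hchain.derivWithin hu, haff.derivWithin hu, hL (left_mem_segment ℝ a b),
    hL (right_mem_segment ℝ a b)]

def cross (u v : ℝ × ℝ) : ℝ := u.1 * v.2 - u.2 * v.1

theorem cross_map_map_eq_det_mul (M : (ℝ × ℝ) →ₗ[ℝ] (ℝ × ℝ)) (u v : ℝ × ℝ) :
    cross (M u) (M v) = LinearMap.det M * cross u v := by
  have hdecomp : ∀ w : ℝ × ℝ, M w = w.1 • M (1, 0) + w.2 • M (0, 1) := fun w => by
    rw [← map_smul, ← map_smul, ← map_add]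
    congr 1
    ext <;> simp
  rw [← LinearMap.det_toMatrix (Module.Basis.finTwoProd ℝ), Matrix.det_fin_two, hdecomp u,
    hdecomp v]
  simp [LinearMap.toMatrix_apply, cross]
  ring

theorem cross_sq_eq_of_perp {n d : ℝ × ℝ} (hn : n.1 ^ 2 + n.2 ^ 2 = 1)
    (hnd : d.1 * n.1 + d.2 * n.2 = 0) : cross n d ^ 2 = d.1 ^ 2 + d.2 ^ 2 := by
  unfold cross
  linear_combination (d.1 ^ 2 + d.2 ^ 2) * hn - (d.1 * n.1 + d.2 * n.2) * hnd

theorem cross_eq_neg_mul_of_perp {n d : ℝ × ℝ} (hn : n.1 ^ 2 + n.2 ^ 2 = 1)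
    (hnd : d.1 * n.1 + d.2 * n.2 = 0) (u : ℝ × ℝ) :
    cross d u = -cross n d * (u.1 * n.1 + u.2 * n.2) := by
  unfold cross
  linear_combination (d.2 * u.1 - d.1 * u.2) * hn + (n.1 * u.2 - n.2 * u.1) * hnd

theorem IsPolyMap.isPolyFun_cross {k : ℕ} {v : ℝ × ℝ → ℝ × ℝ} (hv : IsPolyMap k v)
    (τ : ℝ × ℝ) : IsPolyFun k (fun x => cross τ (v x)) :=
  ((isPolyMap_iff.1 hv).2.const_mul τ.1).sub ((isPolyMap_iff.1 hv).1.const_mul τ.2)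

theorem fderiv_apply_ne_zero_of_jacDet_ne_zero {F : ℝ × ℝ → ℝ × ℝ} {x v : ℝ × ℝ}
    (hJ : jacDet F x ≠ 0) (hv : v ≠ 0) : fderiv ℝ F x v ≠ 0 := fun h =>
  hJ (LinearMap.det_eq_zero_iff_ker_ne_bot.2 fun hker => hv (LinearMap.ker_eq_bot'.1 hker v h))

theorem Amap_apply_dot_eq {F : ℝ × ℝ → ℝ × ℝ} {x n d τ : ℝ × ℝ} (hJ : jacDet F x ≠ 0)
    (hn : n.1 ^ 2 + n.2 ^ 2 = 1) (hnd : d.1 * n.1 + d.2 * n.2 = 0) (hd : d ≠ 0)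
    (hτ : fderiv ℝ F x τ = d) (w : ℝ × ℝ) :
    (Amap F x w).1 * n.1 + (Amap F x w).2 * n.2 = -(cross n d)⁻¹ * cross τ w := by
  have hc : cross n d ≠ 0 :=
    (pow_ne_zero_iff two_ne_zero).1 (cross_sq_eq_of_perp hn hnd ▸ sq_fst_add_sq_snd_ne_zero hd)
  have key : cross d (fderiv ℝ F x w) = jacDet F x * cross τ w :=
    hτ ▸ cross_map_map_eq_det_mul (fderiv ℝ F x : (ℝ × ℝ) →ₗ[ℝ] (ℝ × ℝ)) τ w
  rw [cross_eq_neg_mul_of_perp hn hnd] at key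
  simp only [Amap, smul_apply, Prod.smul_fst, Prod.smul_snd, smul_eq_mul]
  field_simp
  linear_combination -key

theorem mem_closure_Tref {x : ℝ × ℝ} (h₁ : 0 ≤ x.1) (h₂ : 0 ≤ x.2) (h₁₂ : x.1 + x.2 ≤ 1) :
    x ∈ closure Tref := by
  have hsub : openSegment ℝ x ((1 : ℝ) / 3, (1 : ℝ) / 3) ⊆ Tref := by
    rintro _ ⟨s, t, hs, ht, hst, rfl⟩
    simp only [Tref, mem_ofPred_eq, Prod.fst_add, Prod.snd_add, Prod.smul_fst, Prod.smul_snd,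
      smul_eq_mul]
    refine ⟨by positivity, by positivity, by nlinarith⟩
  exact closure_mono hsub (segment_subset_closure_openSegment (left_mem_segment ℝ _ _))

theorem segment_vtx_subset_closure_Tref (i : Fin 3) :
    segment ℝ (vtx i) (vtx (i + 1)) ⊆ closure Tref := by
  rintro _ ⟨s, t, hs, ht, hst, rfl⟩
  apply mem_closure_Tref <;> fin_cases i <;> simp [vtx] <;> linarith

theorem vtx_succ_ne (i : Fin 3) : vtx (i + 1) ≠ vtx i := by
  fin_cases i <;> simp [vtx]

theorem stmt6_general (k : ℕ) (F : ℝ × ℝ → ℝ × ℝ) (hF : IsPolyMap k F)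
    (hdet : ∀ x ∈ closure Tref, jacDet F x ≠ 0)
    (i : Fin 3)
    (L : (ℝ × ℝ) →ᵃ[ℝ] (ℝ × ℝ))
    (hL : ∀ x ∈ segment ℝ (vtx i) (vtx (i + 1)), F x = L x)
    (n : ℝ × ℝ) (hn : n.1 ^ 2 + n.2 ^ 2 = 1)
    (hperp : ∀ x ∈ segment ℝ (vtx i) (vtx (i + 1)),
      ∀ y ∈ segment ℝ (vtx i) (vtx (i + 1)),
        (F x - F y).1 * n.1 + (F x - F y).2 * n.2 = 0)
    (vhat : ℝ × ℝ → ℝ × ℝ) (hvhat : IsPolyMap k vhat)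
    (vtil : ℝ × ℝ → ℝ × ℝ) (hpiola : IsPiola F vhat vtil) :
    ∃ P : MvPolynomial (Fin 2) ℝ, P.totalDegree ≤ k ∧
      ∀ y ∈ F '' segment ℝ (vtx i) (vtx (i + 1)),
        (vtil y).1 * n.1 + (vtil y).2 * n.2 = MvPolynomial.eval ![y.1, y.2] P := by
  set a := vtx i
  set b := vtx (i + 1)
  have ha : a ∈ segment ℝ a b := left_mem_segment ℝ a b
  have hb : b ∈ segment ℝ a b := right_mem_segment ℝ a b
  have hseg : segment ℝ a b ⊆ closure Tref := segment_vtx_subset_closure_Tref i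
  have hτ : ∀ x ∈ segment ℝ a b, fderiv ℝ F x (b - a) = F b - F a := fun x hx =>
    fderiv_apply_sub_eq_of_eqOn_segment hL hx (hF.differentiable x)
  have hd : F b - F a ≠ 0 := hτ a ha ▸
    fderiv_apply_ne_zero_of_jacDet_ne_zero (hdet a (hseg ha)) (sub_ne_zero.2 (vtx_succ_ne i))
  obtain ⟨ψ, hψ, hψF⟩ := exists_isPolyMap_one_lineMap_eq (sub_ne_zero.1 hd).symm a b
  obtain ⟨P, hP, hPeval⟩ :=
    ((hvhat.isPolyFun_cross (b - a)).comp hψ).const_mul (-(cross n (F b - F a))⁻¹)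
  refine ⟨P, hP, ?_⟩
  rintro _ ⟨x, hx, rfl⟩
  obtain ⟨t, -, rfl⟩ := segment_eq_image_lineMap ℝ a b ▸ hx
  have hFx : F (AffineMap.lineMap a b t) = AffineMap.lineMap (F a) (F b) t := by
    rw [hL _ hx, AffineMap.apply_lineMap, ← hL a ha, ← hL b hb]
  rw [← hPeval, hpiola _ (hseg hx)]
  simp only [comp_apply, hFx, hψF]
  exact Amap_apply_dot_eq (hdet _ (hseg hx)) hn (hperp b hb a ha) hd (hτ _ hx) _

/-- On a straight edge `e = F(ê)` (where `F` is affine on the edge `ê` of the reference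
triangle), the normal component of the Piola transform is a polynomial of degree ≤ k. -/
theorem stmt6 (k : ℕ) (hk : 2 ≤ k) (F : ℝ × ℝ → ℝ × ℝ) (hF : IsPolyMap k F)
    (hinj : Set.InjOn F (closure Tref))
    (hdet : ∀ x ∈ closure Tref, jacDet F x ≠ 0)
    (i : Fin 3)
    (L : (ℝ × ℝ) →ᵃ[ℝ] (ℝ × ℝ))
    (hL : ∀ x ∈ segment ℝ (vtx i) (vtx (i + 1)), F x = L x)
    (n : ℝ × ℝ) (hn : n.1 ^ 2 + n.2 ^ 2 = 1)
    (hperp : ∀ x ∈ segment ℝ (vtx i) (vtx (i + 1)),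
      ∀ y ∈ segment ℝ (vtx i) (vtx (i + 1)),
        (F x - F y).1 * n.1 + (F x - F y).2 * n.2 = 0)
    (vhat : ℝ × ℝ → ℝ × ℝ) (hvhat : IsPolyMap k vhat)
    (vtil : ℝ × ℝ → ℝ × ℝ) (hpiola : IsPiola F vhat vtil) :
    ∃ P : MvPolynomial (Fin 2) ℝ, P.totalDegree ≤ k ∧
      ∀ y ∈ F '' segment ℝ (vtx i) (vtx (i + 1)),
        (vtil y).1 * n.1 + (vtil y).2 * n.2 = MvPolynomial.eval ![y.1, y.2] P :=
  stmt6_general k F hF hdet i L hL n hn hperp vhat hvhat vtil hpiola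
end
end

section
/- Let U ⊂ ℝ² be open and let F : U → ℝ² be a twice continuously differentiable map that is injective and satisfies det DF(x̂) ≠ 0 for every x̂ ∈ U, and let v̂ : U → ℝ² be continuously differentiable. Define v on V := F(U) by v(F(x̂)) = DF(x̂) v̂(x̂) / det DF(x̂) for x̂ ∈ U. Then v is differentiable on V and for every x̂ ∈ U one has (div v)(F(x̂)) = (div v̂)(x̂) / det DF(x̂), where for a vector field w = (w₁, w₂) one writes div w := ∂w₁/∂x₁ + ∂w₂/∂x₂. -/
/-!
In the plane the adjugate of `L` is `tr L • 1 - L`, which is linear in `L`. Writing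
`u = v ∘ F`, the Piola relation says `v̂ = adj(DF) u`. Differentiating, the divergence of `v̂`
splits into two traces: `tr (adj(DF) · Dv · DF) = det DF · div v` by cyclicity and
`adj(DF) DF = det DF`, and the trace of `h ↦ adj(D²F h) u`, which vanishes because `D²F` is
symmetric (the rows of the cofactor matrix are divergence free). Differentiability of `v` comes
from the local inverse of `F`.
-/

open Set MeasureTheory Function

noncomputable section

open Module Polynomial Filter Topology

namespace LinearMap

variable {K M : Type*} [Field K] [AddCommGroup M] [Module K M] [FiniteDimensional K M]

theorem charpoly_eq_of_finrank_eq_two (h2 : finrank K M = 2) (f : M →ₗ[K] M) :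
    f.charpoly = X ^ 2 - C (trace K M f) * X + C (LinearMap.det f) := by
  let b := Module.finBasisOfFinrankEq K M h2
  rw [← charpoly_toMatrix f b, Matrix.charpoly_fin_two, trace_eq_matrix_trace K b, det_toMatrix]

theorem mul_trace_smul_one_sub_s7 (h2 : finrank K M = 2) (f : M →ₗ[K] M) :
    f * (trace K M f • 1 - f) = LinearMap.det f • 1 := by
  have := aeval_self_charpoly f
  simp only [charpoly_eq_of_finrank_eq_two h2, map_add, map_sub, map_mul, map_pow, aeval_X,
    aeval_C, Algebra.algebraMap_eq_smul_one, smul_mul_assoc, one_mul] at this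
  rw [eq_comm, ← sub_eq_zero, ← this, mul_sub, mul_smul_comm, mul_one, sq]
  abel

theorem trace_smul_one_sub_mul (h2 : finrank K M = 2) (f : M →ₗ[K] M) :
    (trace K M f • 1 - f) * f = LinearMap.det f • 1 := by
  rw [sub_mul, smul_mul_assoc, one_mul, ← mul_trace_smul_one_sub_s7 h2, mul_sub, mul_smul_comm,
    mul_one]

theorem two_mul_det_eq_of_finrank_eq_two (h2 : finrank K M = 2) (f : M →ₗ[K] M) :
    2 * LinearMap.det f = trace K M f ^ 2 - trace K M (f * f) := by
  have := congr_arg (trace K M) (mul_trace_smul_one_sub_s7 h2 f)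
  simp only [mul_sub, mul_smul_comm, mul_one, map_sub, map_smul, trace_one, h2,
    smul_eq_mul] at this
  push_cast at this
  linear_combination -this

theorem trace_trace_smul_one_sub_mul_mul (h2 : finrank K M = 2) (f g : M →ₗ[K] M) :
    trace K M ((trace K M f • 1 - f) * g * f) = LinearMap.det f * trace K M g := by
  rw [trace_mul_cycle, mul_trace_smul_one_sub_s7 h2, smul_mul_assoc, one_mul, map_smul, smul_eq_mul]

end LinearMap

theorem HasStrictFDerivAt.differentiableAt_of_comp_eventuallyEq {𝕜 E F G : Type*}
    [NontriviallyNormedField 𝕜] [NormedAddCommGroup E] [NormedSpace 𝕜 E] [CompleteSpace E]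
    [NormedAddCommGroup F] [NormedSpace 𝕜 F] [NormedAddCommGroup G] [NormedSpace 𝕜 G]
    {f : E → F} {f' : E ≃L[𝕜] F} {a : E} (hf : HasStrictFDerivAt f (f' : E →L[𝕜] F) a)
    {v : F → G} {w : E → G} (hw : DifferentiableAt 𝕜 w a)
    (hvw : ∀ᶠ x in 𝓝 a, v (f x) = w x) :
    DifferentiableAt 𝕜 v (f a) := by
  set g := hf.localInverse f f' a
  have hvg : v =ᶠ[𝓝 (f a)] w ∘ g := by
    filter_upwards [hf.eventually_right_inverse, hf.localInverse_tendsto.eventually hvw]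
      with y hfg hy
    rw [Function.comp_apply, ← hy, hfg]
  rw [hvg.differentiableAt_iff]
  exact (hf.localInverse_apply_image.symm ▸ hw).comp _
    hf.to_localInverse.hasFDerivAt.differentiableAt

namespace ContinuousLinearMap

variable {E : Type*} [NormedAddCommGroup E] [NormedSpace ℝ E] [FiniteDimensional ℝ E]

def traceL : (E →L[ℝ] E) →L[ℝ] ℝ :=
  LinearMap.toContinuousLinearMap (LinearMap.trace ℝ E ∘ₗ coeLM ℝ)

theorem traceL_apply (f : E →L[ℝ] E) : traceL f = LinearMap.trace ℝ E f := rfl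

def adj₂ : (E →L[ℝ] E) →L[ℝ] (E →L[ℝ] E) :=
  traceL.smulRight 1 - ContinuousLinearMap.id ℝ _

theorem adj₂_apply (f : E →L[ℝ] E) : adj₂ f = LinearMap.trace ℝ E f • 1 - f := rfl

theorem toLinearMap_adj₂ (f : E →L[ℝ] E) :
    (adj₂ f : E →ₗ[ℝ] E) = LinearMap.trace ℝ E f • 1 - f := rfl

theorem adj₂_mul (h2 : finrank ℝ E = 2) (f : E →L[ℝ] E) : adj₂ f * f = f.det • 1 := by
  apply coe_injective
  rw [toLinearMap_mul, toLinearMap_adj₂, LinearMap.trace_smul_one_sub_mul h2]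
  rfl

theorem adj₂_apply_inv_det_smul (h2 : finrank ℝ E = 2) {f : E →L[ℝ] E} (hf : f.det ≠ 0)
    (u : E) :
    adj₂ f ((f.det)⁻¹ • f u) = u := by
  have h := congr($(adj₂_mul h2 f) u)
  rw [mul_apply_eq_comp, smul_apply, one_apply_eq_self] at h
  rw [map_smul, h, smul_smul, inv_mul_cancel₀ hf, one_smul]

theorem traceL_adj₂_mul_mul (h2 : finrank ℝ E = 2) (f g : E →L[ℝ] E) :
    traceL (adj₂ f * g * f) = f.det * traceL g := by
  simp only [traceL_apply, toLinearMap_mul, toLinearMap_adj₂]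
  exact LinearMap.trace_trace_smul_one_sub_mul_mul h2 _ _

theorem traceL_flip_adj₂_comp_eq_zero {H : E →L[ℝ] E →L[ℝ] E}
    (hH : ∀ h k, H h k = H k h) (u : E) : traceL ((adj₂ ∘L H).flip u) = 0 := by
  have : (adj₂ ∘L H).flip u = (traceL ∘L H).smulRight u - H u := by
    ext h
    simp [adj₂_apply, traceL_apply, hH h u]
  rw [this, traceL_apply]
  change LinearMap.trace ℝ E ((traceL ∘L H).toLinearMap.smulRight u - (H u).toLinearMap) = 0
  rw [map_sub, LinearMap.trace_smulRight, coe_coe, comp_apply, traceL_apply, sub_self]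

theorem _root_.DifferentiableAt.det_of_finrank_eq_two {E' : Type*} [NormedAddCommGroup E']
    [NormedSpace ℝ E'] (h2 : finrank ℝ E = 2) {f : E' → E →L[ℝ] E} {x : E'}
    (hf : DifferentiableAt ℝ f x) : DifferentiableAt ℝ (fun y => (f y).det) x := by
  have hdet : (fun y => (f y).det) =
      fun y => (traceL (f y) ^ 2 - traceL (f y ∘L f y)) / 2 := by
    ext y
    rw [eq_div_iff two_ne_zero, mul_comm, traceL_apply, traceL_apply, ← mul_def,
      toLinearMap_mul]
    exact LinearMap.two_mul_det_eq_of_finrank_eq_two h2 _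
  rw [hdet]
  fun_prop

theorem traceL_fderiv_adj₂_fderiv_apply_comp (h2 : finrank ℝ E = 2) {F v : E → E} {x : E}
    (hF : ContDiffAt ℝ 2 F x) (hv : DifferentiableAt ℝ v (F x)) :
    traceL (fderiv ℝ (fun y => adj₂ (fderiv ℝ F y) (v (F y))) x) =
      (fderiv ℝ F x).det * traceL (fderiv ℝ v (F x)) := by
  set L := fderiv ℝ F x
  set H := fderiv ℝ (fderiv ℝ F) x
  have hH : HasFDerivAt (fderiv ℝ F) H x :=
    ((hF.fderiv_right le_rfl).differentiableAt one_ne_zero).hasFDerivAt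
  have hsymm : ∀ h k, H h k = H k h := fun h k =>
    (hF.isSymmSndFDerivAt (by simp [minSmoothness_of_isRCLikeNormedField])).eq h k
  have hu : HasFDerivAt (fun y => v (F y)) (fderiv ℝ v (F x) ∘L L) x :=
    hv.hasFDerivAt.comp x (hF.differentiableAt (by norm_num)).hasFDerivAt
  have hw : HasFDerivAt (fun y => adj₂ (fderiv ℝ F y) (v (F y))) _ x :=
    (adj₂.hasFDerivAt.comp x hH).clm_apply hu
  rw [hw.fderiv, map_add, ← mul_def, ← mul_def, ← mul_assoc, traceL_adj₂_mul_mul h2,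
    traceL_flip_adj₂_comp_eq_zero hsymm, add_zero]

end ContinuousLinearMap

section Piola

open ContinuousLinearMap

variable {E : Type*} [NormedAddCommGroup E] [NormedSpace ℝ E] [FiniteDimensional ℝ E]

theorem differentiableAt_of_piola (h2 : finrank ℝ E = 2) {F vh v : E → E} {x : E}
    (hF : ContDiffAt ℝ 2 F x) (hdet : (fderiv ℝ F x).det ≠ 0)
    (hvh : DifferentiableAt ℝ vh x)
    (hrel : ∀ᶠ y in 𝓝 x, v (F y) = ((fderiv ℝ F y).det)⁻¹ • fderiv ℝ F y (vh y)) :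
    DifferentiableAt ℝ v (F x) := by
  have hstrict : HasStrictFDerivAt F
      ((fderiv ℝ F x).toContinuousLinearEquivOfDetNeZero hdet : E →L[ℝ] E) x := by
    rw [coe_toContinuousLinearEquivOfDetNeZero]
    exact hF.hasStrictFDerivAt (by norm_num)
  have hDF : DifferentiableAt ℝ (fderiv ℝ F) x :=
    (hF.fderiv_right le_rfl).differentiableAt one_ne_zero
  exact hstrict.differentiableAt_of_comp_eventuallyEq
    (((hDF.det_of_finrank_eq_two h2).inv hdet).smul (hDF.clm_apply hvh)) hrel

theorem traceL_fderiv_of_piola (h2 : finrank ℝ E = 2) {F vh v : E → E} {x : E}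
    (hF : ContDiffAt ℝ 2 F x) (hdet : (fderiv ℝ F x).det ≠ 0)
    (hv : DifferentiableAt ℝ v (F x))
    (hrel : ∀ᶠ y in 𝓝 x, v (F y) = ((fderiv ℝ F y).det)⁻¹ • fderiv ℝ F y (vh y)) :
    traceL (fderiv ℝ vh x) = (fderiv ℝ F x).det * traceL (fderiv ℝ v (F x)) := by
  have hdet_near : ∀ᶠ y in 𝓝 x, (fderiv ℝ F y).det ≠ 0 :=
    (((hF.fderiv_right le_rfl).differentiableAt one_ne_zero).det_of_finrank_eq_two h2
      ).continuousAt.eventually_ne hdet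
  have hvh : vh =ᶠ[𝓝 x] fun y => adj₂ (fderiv ℝ F y) (v (F y)) := by
    filter_upwards [hrel, hdet_near] with y hy hy'
    rw [hy, adj₂_apply_inv_det_smul h2 hy']
  rw [hvh.fderiv_eq, traceL_fderiv_adj₂_fderiv_apply_comp h2 hF hv]

end Piola

theorem traceL_eq_fst_add_snd (L : (ℝ × ℝ) →L[ℝ] (ℝ × ℝ)) :
    ContinuousLinearMap.traceL L = (L (1, 0)).1 + (L (0, 1)).2 := by
  rw [ContinuousLinearMap.traceL_apply,
    LinearMap.trace_eq_matrix_trace ℝ (Basis.finTwoProd ℝ), Matrix.trace_fin_two]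
  simp [LinearMap.toMatrix_apply, Basis.coe_finTwoProd_repr]

theorem pdiv_eq_traceL_fderiv (w : ℝ × ℝ → ℝ × ℝ) (x : ℝ × ℝ) :
    pdiv w x = ContinuousLinearMap.traceL (fderiv ℝ w x) :=
  (traceL_eq_fst_add_snd _).symm

theorem stmt7_general (U : Set (ℝ × ℝ)) (hU : IsOpen U) (F : ℝ × ℝ → ℝ × ℝ)
    (hF : ContDiffOn ℝ 2 F U)
    (hdet : ∀ x ∈ U, jacDet F x ≠ 0)
    (vhat : ℝ × ℝ → ℝ × ℝ) (hvhat : ContDiffOn ℝ 1 vhat U)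
    (v : ℝ × ℝ → ℝ × ℝ)
    (hrel : ∀ x ∈ U, v (F x) = (jacDet F x)⁻¹ • fderiv ℝ F x (vhat x)) :
    (∀ y ∈ F '' U, DifferentiableAt ℝ v y) ∧
    ∀ x ∈ U, pdiv v (F x) = pdiv vhat x / jacDet F x := by
  have h2 : finrank ℝ (ℝ × ℝ) = 2 := by simp
  have hrel' : ∀ x ∈ U,
      ∀ᶠ y in 𝓝 x, v (F y) = (jacDet F y)⁻¹ • fderiv ℝ F y (vhat y) :=
    fun x hx => eventually_of_mem (hU.mem_nhds hx) hrel
  have hFx : ∀ x ∈ U, ContDiffAt ℝ 2 F x := fun x hx => hF.contDiffAt (hU.mem_nhds hx)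
  have hv : ∀ x ∈ U, DifferentiableAt ℝ v (F x) := fun x hx =>
    differentiableAt_of_piola h2 (hFx x hx) (hdet x hx)
      ((hvhat.contDiffAt (hU.mem_nhds hx)).differentiableAt one_ne_zero) (hrel' x hx)
  refine ⟨fun _ ⟨x, hx, hxy⟩ => hxy ▸ hv x hx, fun x hx => ?_⟩
  rw [eq_div_iff (hdet x hx), pdiv_eq_traceL_fderiv, pdiv_eq_traceL_fderiv,
    traceL_fderiv_of_piola h2 (hFx x hx) (hdet x hx) (hv x hx) (hrel' x hx)]
  exact mul_comm _ _

/-- The Piola transform is divergence-preserving up to the Jacobian factor: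
if `v(F(x̂)) = DF(x̂)v̂(x̂)/det DF(x̂)` on an open set `U`, then `v` is differentiable
on `F(U)` and `(div v)(F(x̂)) = (div v̂)(x̂) / det DF(x̂)`. -/
theorem stmt7 (U : Set (ℝ × ℝ)) (hU : IsOpen U) (F : ℝ × ℝ → ℝ × ℝ)
    (hF : ContDiffOn ℝ 2 F U) (hinj : Set.InjOn F U)
    (hdet : ∀ x ∈ U, jacDet F x ≠ 0)
    (vhat : ℝ × ℝ → ℝ × ℝ) (hvhat : ContDiffOn ℝ 1 vhat U)
    (v : ℝ × ℝ → ℝ × ℝ)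
    (hrel : ∀ x ∈ U, v (F x) = (jacDet F x)⁻¹ • fderiv ℝ F x (vhat x)) :
    (∀ y ∈ F '' U, DifferentiableAt ℝ v y) ∧
    ∀ x ∈ U, pdiv v (F x) = pdiv vhat x / jacDet F x :=
  stmt7_general U hU F hF hdet vhat hvhat v hrel
end
end

section
/- Let n ≥ 2 be an even integer and let a < b be reals, and set x_i := a + i(b−a)/n for i = 0, 1, …, n. Then there exist weights ω₀, …, ω_n ∈ ℝ such that Σ_{i=0}^{n} ω_i p(x_i) = ∫_a^b p(t) dt for every polynomial p with real coefficients of degree ≤ n+1. -/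
/-!
Take the interpolatory weights `∫ ℓᵢ` of the Lagrange basis; they integrate exactly every
polynomial of degree ≤ n. A polynomial `p` of degree ≤ n + 1 differs from its remainder modulo
the monic nodal polynomial `w = ∏ (X - xᵢ)` by a constant multiple of `w`, which vanishes at
the nodes. So exactness on `p` amounts to `∫ₐᵇ w = 0`. The nodes are symmetric about the
midpoint and there are an odd number `n + 1` of them, so `w (a + b - t) = -w t`, and the
integral of `w` vanishes.
-/

open MeasureTheory Polynomial Lagrange Finset

section Interpolatory

variable {ι : Type*} [DecidableEq ι] (s : Finset ι) (v : ι → ℝ) (a b : ℝ)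

noncomputable def interpolatoryWeight (i : ι) : ℝ :=
  ∫ t in a..b, (Lagrange.basis s v i).eval t

variable {s v a b}

theorem sum_interpolatoryWeight_mul_eval_of_degree_lt (hvs : Set.InjOn v s) {p : ℝ[X]}
    (hp : p.degree < #s) :
    ∑ i ∈ s, interpolatoryWeight s v a b i * p.eval (v i) = ∫ t in a..b, p.eval t := by
  conv_rhs => rw [eq_interpolate hvs hp, interpolate_apply]
  simp only [eval_finsetSum, eval_mul, eval_C]
  rw [intervalIntegral.integral_finsetSum fun i _ =>
    (Polynomial.continuous _).const_mul _ |>.intervalIntegrable a b]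
  refine sum_congr rfl fun i _ => ?_
  rw [intervalIntegral.integral_const_mul, interpolatoryWeight, mul_comm]

theorem sum_interpolatoryWeight_mul_eval_of_natDegree_le (hvs : Set.InjOn v s)
    (hnodal : ∫ t in a..b, (nodal s v).eval t = 0) {p : ℝ[X]} (hp : p.natDegree ≤ #s) :
    ∑ i ∈ s, interpolatoryWeight s v a b i * p.eval (v i) = ∫ t in a..b, p.eval t := by
  set w := nodal s v
  obtain ⟨k, hk⟩ : ∃ k, p /ₘ w = C k :=
    ⟨_, eq_C_of_natDegree_eq_zero <| by
      rw [natDegree_divByMonic p nodal_monic, natDegree_nodal]; omega⟩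
  have hdecomp : ∀ x, p.eval x = (p %ₘ w).eval x + k * w.eval x := fun x => by
    conv_lhs => rw [← modByMonic_add_div p w, hk]
    simp only [eval_add, eval_mul, eval_C, mul_comm]
  have hrem : (p %ₘ w).degree < #s :=
    degree_nodal (s := s) (v := v) ▸ degree_modByMonic_lt p nodal_monic
  calc ∑ i ∈ s, interpolatoryWeight s v a b i * p.eval (v i)
      = ∑ i ∈ s, interpolatoryWeight s v a b i * (p %ₘ w).eval (v i) :=
        sum_congr rfl fun i hi => by rw [hdecomp, eval_nodal_at_node hi, mul_zero, add_zero]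
    _ = (∫ t in a..b, (p %ₘ w).eval t) + k * ∫ t in a..b, w.eval t := by
        rw [sum_interpolatoryWeight_mul_eval_of_degree_lt hvs hrem, hnodal]; ring
    _ = ∫ t in a..b, ((p %ₘ w).eval t + k * w.eval t) := by
        rw [intervalIntegral.integral_add ((Polynomial.continuous _).intervalIntegrable a b)
          ((Polynomial.continuous _).const_mul _ |>.intervalIntegrable a b),
          intervalIntegral.integral_const_mul]
    _ = ∫ t in a..b, p.eval t := by simp only [hdecomp]

end Interpolatory

theorem intervalIntegral.integral_eq_zero_of_comp_add_sub_eq_neg {f : ℝ → ℝ} {a b : ℝ}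
    (hf : ∀ t, f (a + b - t) = -f t) : ∫ t in a..b, f t = 0 := by
  have h := intervalIntegral.integral_comp_sub_left f (a + b) (a := a) (b := b)
  simp only [hf, intervalIntegral.integral_neg, add_sub_cancel_right, add_sub_cancel_left] at h
  linarith

theorem Lagrange.eval_nodal_sub_eq_neg {R ι : Type*} [CommRing R] [Fintype ι] {v : ι → R}
    {d : R} (σ : ι ≃ ι) (hσ : ∀ i, v (σ i) = d - v i) (hodd : Odd (Fintype.card ι))
    (t : R) :
    (nodal univ v).eval (d - t) = -(nodal univ v).eval t := by
  simp only [eval_nodal]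
  calc ∏ i, (d - t - v i) = ∏ i, (d - t - v (σ i)) :=
        (Fintype.prod_equiv σ _ _ fun _ => rfl).symm
    _ = ∏ i, -(t - v i) := by simp only [hσ]; congr! 1; ring
    _ = -∏ i, (t - v i) := by rw [prod_neg, card_univ, hodd.neg_one_pow, neg_one_mul]

theorem strictMono_equallySpaced {n : ℕ} (hn : n ≠ 0) {a b : ℝ} (hab : a < b) :
    StrictMono fun i : Fin (n + 1) => a + (i : ℕ) * (b - a) / n := fun i j hij => by
  have : ((i : ℕ) : ℝ) < (j : ℕ) := Nat.cast_lt.mpr hij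
  have : (0 : ℝ) < n := Nat.cast_pos.mpr (Nat.pos_of_ne_zero hn)
  dsimp only
  gcongr

theorem equallySpaced_rev {n : ℕ} (hn : n ≠ 0) (a b : ℝ) (i : Fin (n + 1)) :
    a + (i.rev : ℕ) * (b - a) / n = a + b - (a + (i : ℕ) * (b - a) / n) := by
  rw [Fin.val_rev, Nat.add_sub_add_right, Nat.cast_sub (Nat.lt_succ_iff.mp i.isLt)]
  field_simp
  ring

/-- Closed Newton–Cotes quadrature with an even number `n` of subintervals gains a degree:
there are weights at the `n+1` equally spaced nodes in `[a,b]` making the rule exact on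
all polynomials of degree ≤ n+1. -/
theorem stmt16 (n : ℕ) (hn : 2 ≤ n) (heven : Even n) (a b : ℝ) (hab : a < b) :
    ∃ ω : Fin (n + 1) → ℝ, ∀ p : Polynomial ℝ, p.natDegree ≤ n + 1 →
      ∑ i, ω i * p.eval (a + (i : ℕ) * (b - a) / n) = ∫ t in a..b, p.eval t := by
  have hn0 : n ≠ 0 := by omega
  refine ⟨interpolatoryWeight univ (fun i : Fin (n + 1) => a + (i : ℕ) * (b - a) / n) a b,
    fun p hp => ?_⟩
  refine sum_interpolatoryWeight_mul_eval_of_natDegree_le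
    (strictMono_equallySpaced hn0 hab).injective.injOn ?_ (by simpa using hp)
  refine intervalIntegral.integral_eq_zero_of_comp_add_sub_eq_neg fun t => ?_
  refine eval_nodal_sub_eq_neg Fin.revPerm (equallySpaced_rev hn0 a b) ?_ t
  simpa using heven.add_one
end
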